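/- arXiv:2211.13341 — 8 statements merged into one kernel-verified Lean document; each statement's English description precedes it below -/
import Mathlib

section
/- Let G' be a connected simple graph with a distinguished vertex w, and let G be the connected graph obtained from G' by attaching k ≥ 2 new pendant vertices, labeled 1,…,k, each adjacent only to w. Let Δ be the distance squared matrix of G, let Δ_k be the distance squared matrix of the graph G \ {1,…,k−1} (G with all but one of the new pendant vertices deleted), indexed so that the remaining pendant vertex is vertex k, and let e_k denote the standard basis (indicator) vector of vertex k. Then i_-(Δ) = (k − 1) + i_-( Δ_k + (4 − 4/k)·e_k e_k^T ). -/
/-!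
Two pendant vertices `a ≠ b` hanging from the same vertex are at equal distance from every
other vertex, so `Δ (e_a - e_b) = -4 (e_a - e_b)`. The vectors `e_{p i} - e_{p (k-1)}`,
`i < k - 1`, therefore span a `(k - 1)`-dimensional space on which `Δ` is negative definite and
which is `Δ`-orthogonal to every vector constant on the pendants. Writing such a vector through
its values off `p 0, …, p (k-2)`, the common pendant value being `1/k` times the entry at
`p (k-1)`, turns the form of `Δ` into that of `Δ_k + (4 - 4/k) e_k e_kᵀ`. Sylvester's law of
inertia, in the form "`i_- M = dim W` whenever `M` is negative definite on `W` and positive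
semidefinite on a subspace of complementary dimension", adds the two counts.
-/
open Matrix

/-- The distance squared matrix of a graph. -/
noncomputable def distSqMatrix {V : Type*} [Fintype V] (G : SimpleGraph V) :
    Matrix V V ℝ := Matrix.of fun i j => ((G.dist i j : ℝ)) ^ 2

/-- number of positive eigenvalues (with multiplicity) of a real symmetric matrix -/
noncomputable def iPos {V : Type*} [Fintype V] [DecidableEq V] (M : Matrix V V ℝ) : ℕ :=
  if h : M.IsHermitian then (Finset.univ.filter fun i => 0 < h.eigenvalues i).card else 0

/-- number of negative eigenvalues (with multiplicity) of a real symmetric matrix -/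
noncomputable def iNeg {V : Type*} [Fintype V] [DecidableEq V] (M : Matrix V V ℝ) : ℕ :=
  if h : M.IsHermitian then (Finset.univ.filter fun i => h.eigenvalues i < 0).card else 0

/-- multiplicity of 0 as an eigenvalue of a real symmetric matrix -/
noncomputable def iZero {V : Type*} [Fintype V] [DecidableEq V] (M : Matrix V V ℝ) : ℕ :=
  if h : M.IsHermitian then (Finset.univ.filter fun i => h.eigenvalues i = 0).card else 0

open Module

lemma dotProduct_mulVec_extend {V ι : Type*} [Fintype V] [Fintype ι] {e : ι → V}
    (he : e.Injective) (M : Matrix V V ℝ) (x : ι → ℝ) :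
    Function.extend e x 0 ⬝ᵥ (M *ᵥ Function.extend e x 0) = x ⬝ᵥ (M.submatrix e e *ᵥ x) := by
  have hsum (g : V → ℝ) : ∑ v, g v * Function.extend e x 0 v = ∑ i, g (e i) * x i :=
    (Fintype.sum_of_injective e he _ _
      (fun v hv => by rw [Function.extend_apply' _ _ _ (by simpa using hv)]; simp)
      (fun i => by rw [he.extend_apply])).symm
  rw [dotProduct_comm]
  simp only [dotProduct, mulVec, hsum, submatrix_apply]
  exact Finset.sum_congr rfl fun _ _ => mul_comm _ _

lemma finrank_add_finrank_le_of_neg_of_nonneg {E : Type*} [AddCommGroup E] [Module ℝ E]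
    [FiniteDimensional ℝ E] (Q : E → ℝ) {W₁ W₂ : Submodule ℝ E}
    (h₁ : ∀ x ∈ W₁, x ≠ 0 → Q x < 0) (h₂ : ∀ x ∈ W₂, 0 ≤ Q x) :
    finrank ℝ W₁ + finrank ℝ W₂ ≤ finrank ℝ E :=
  Submodule.finrank_add_finrank_le_of_disjoint <| Submodule.disjoint_def.mpr fun x hx₁ hx₂ =>
    by_contra fun hx => (h₁ x hx₁ hx).not_ge (h₂ x hx₂)

section Inertia

variable {V : Type*} [Fintype V] [DecidableEq V]

lemma Matrix.IsHermitian.dotProduct_mulVec_eigenvectorUnitary_extend {M : Matrix V V ℝ}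
    (hM : M.IsHermitian) {s : Set V} [Fintype s] (c : s → ℝ) :
    let z := (hM.eigenvectorUnitary : Matrix V V ℝ) *ᵥ Function.extend Subtype.val c 0
    z ⬝ᵥ (M *ᵥ z) = ∑ i : s, hM.eigenvalues i * c i ^ 2 := by
  have hdiag := hM.conjStarAlgAut_star_eigenvectorUnitary
  simp only [Unitary.conjStarAlgAut_star_apply, RCLike.ofReal_real_eq_id, Function.id_comp,
    star_eq_conjTranspose, conjTranspose_eq_transpose_of_trivial] at hdiag
  intro z
  have hz : z ⬝ᵥ (M *ᵥ z) = Function.extend Subtype.val c 0 ⬝ᵥ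
      (diagonal hM.eigenvalues *ᵥ Function.extend Subtype.val c 0) := by
    rw [← hdiag, ← mulVec_mulVec, ← mulVec_mulVec, dotProduct_mulVec _ _ᵀ, vecMul_transpose]
  rw [hz, dotProduct_mulVec_extend Subtype.val_injective,
    submatrix_diagonal _ _ Subtype.val_injective]
  simp only [dotProduct, mulVec_diagonal, Function.comp_apply]
  exact Finset.sum_congr rfl fun _ _ => by ring

lemma Matrix.IsHermitian.exists_finrank_eq_iNeg {M : Matrix V V ℝ} (hM : M.IsHermitian) :
    ∃ Wn Wp : Submodule ℝ (V → ℝ),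
      (∀ x ∈ Wn, x ≠ 0 → x ⬝ᵥ (M *ᵥ x) < 0) ∧ (∀ x ∈ Wp, 0 ≤ x ⬝ᵥ (M *ᵥ x)) ∧
      finrank ℝ Wn = iNeg M ∧ finrank ℝ Wn + finrank ℝ Wp = Fintype.card V := by
  classical
  set U : Matrix V V ℝ := ↑hM.eigenvectorUnitary
  have hU : Function.Injective U.mulVecLin := by
    intro a b hab
    simpa [U, mulVec_mulVec] using congrArg ((star U) *ᵥ ·) hab
  let L (s : Set V) : (s → ℝ) →ₗ[ℝ] V → ℝ :=
    U.mulVecLin ∘ₗ Function.ExtendByZero.linearMap ℝ Subtype.val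
  have hL (s : Set V) : Function.Injective (L s) :=
    hU.comp (Function.extend_injective Subtype.val_injective (0 : V → ℝ))
  have hQ (s : Set V) (c : s → ℝ) : L s c ⬝ᵥ (M *ᵥ L s c) = ∑ i : s, hM.eigenvalues i * c i ^ 2 :=
    hM.dotProduct_mulVec_eigenvectorUnitary_extend c
  have hrank (s : Set V) : finrank ℝ (LinearMap.range (L s)) = Fintype.card s := by
    rw [LinearMap.finrank_range_of_inj (hL s), finrank_fintype_fun_eq_card]
  set sn : Set V := {i | hM.eigenvalues i < 0}
  refine ⟨LinearMap.range (L sn), LinearMap.range (L snᶜ), ?_, ?_, ?_, ?_⟩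
  · rintro _ ⟨c, rfl⟩ hc
    rw [hQ]
    have hc0 : c ≠ 0 := by rintro rfl; exact hc (map_zero _)
    obtain ⟨i, hi⟩ := Function.ne_iff.mp hc0
    exact Finset.sum_neg' (fun j _ => mul_nonpos_of_nonpos_of_nonneg j.2.le (sq_nonneg _))
      ⟨i, Finset.mem_univ _, mul_neg_of_neg_of_pos i.2 (pow_two_pos_of_ne_zero hi)⟩
  · rintro _ ⟨c, rfl⟩
    rw [hQ]
    exact Finset.sum_nonneg fun j _ => mul_nonneg (not_lt.mp j.2) (sq_nonneg _)
  · rw [hrank, iNeg, dif_pos hM, Fintype.card_subtype]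
    rfl
  · rw [hrank, hrank, Fintype.card_compl_set, Nat.add_sub_cancel' (set_fintype_card_le_univ _)]

lemma iNeg_eq_finrank_of_neg_of_nonneg {M : Matrix V V ℝ} (hM : M.IsHermitian)
    {Wn Wp : Submodule ℝ (V → ℝ)} (hn : ∀ x ∈ Wn, x ≠ 0 → x ⬝ᵥ (M *ᵥ x) < 0)
    (hp : ∀ x ∈ Wp, 0 ≤ x ⬝ᵥ (M *ᵥ x))
    (hcard : Fintype.card V ≤ finrank ℝ Wn + finrank ℝ Wp) :
    iNeg M = finrank ℝ Wn := by
  obtain ⟨En, Ep, hEn, hEp, hrank, hsum⟩ := hM.exists_finrank_eq_iNeg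
  have h₁ := finrank_add_finrank_le_of_neg_of_nonneg _ hn hEp
  have h₂ := finrank_add_finrank_le_of_neg_of_nonneg _ hEn hp
  rw [finrank_fintype_fun_eq_card] at h₁ h₂
  omega

lemma iNeg_eq_card_of_neg {M : Matrix V V ℝ} (hM : M.IsHermitian)
    (hneg : ∀ x ≠ 0, x ⬝ᵥ (M *ᵥ x) < 0) : iNeg M = Fintype.card V := by
  rw [iNeg_eq_finrank_of_neg_of_nonneg hM (Wn := ⊤) (Wp := ⊥) (fun x _ => hneg x) (by simp)
    (by simp), finrank_top, finrank_fintype_fun_eq_card]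

lemma iNeg_eq_add_of_injective {ι κ : Type*} [Fintype ι] [DecidableEq ι] [Fintype κ]
    [DecidableEq κ] {M : Matrix V V ℝ} {A : Matrix ι ι ℝ} {B : Matrix κ κ ℝ}
    (hM : M.IsHermitian) (hA : A.IsHermitian) (hB : B.IsHermitian)
    (T : (ι → ℝ) × (κ → ℝ) →ₗ[ℝ] V → ℝ) (hT : Function.Injective T)
    (hcard : Fintype.card V ≤ Fintype.card ι + Fintype.card κ)
    (hQ : ∀ y x, T (y, x) ⬝ᵥ (M *ᵥ T (y, x)) = y ⬝ᵥ (A *ᵥ y) + x ⬝ᵥ (B *ᵥ x)) :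
    iNeg M = iNeg A + iNeg B := by
  obtain ⟨An, Ap, hAn, hAp, hrA, hsA⟩ := hA.exists_finrank_eq_iNeg
  obtain ⟨Bn, Bp, hBn, hBp, hrB, hsB⟩ := hB.exists_finrank_eq_iNeg
  let L (A' : Submodule ℝ (ι → ℝ)) (B' : Submodule ℝ (κ → ℝ)) :=
    T ∘ₗ A'.subtype.prodMap B'.subtype
  have hrank (A' B') : finrank ℝ (LinearMap.range (L A' B')) = finrank ℝ A' + finrank ℝ B' := by
    have hL : Function.Injective (L A' B') := by
      rw [LinearMap.coe_comp, LinearMap.coe_prodMap]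
      exact hT.comp (Subtype.val_injective.prodMap Subtype.val_injective)
    rw [LinearMap.finrank_range_of_inj hL, finrank_prod]
  have hAn' (a) (ha : a ∈ An) : a ⬝ᵥ (A *ᵥ a) ≤ 0 :=
    (eq_or_ne a 0).elim (fun h => by simp [h]) fun h => (hAn a ha h).le
  have hBn' (b) (hb : b ∈ Bn) : b ⬝ᵥ (B *ᵥ b) ≤ 0 :=
    (eq_or_ne b 0).elim (fun h => by simp [h]) fun h => (hBn b hb h).le
  rw [← hrA, ← hrB, ← hrank]
  refine iNeg_eq_finrank_of_neg_of_nonneg hM (Wp := LinearMap.range (L Ap Bp)) ?_ ?_ ?_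
  · rintro _ ⟨⟨a, b⟩, rfl⟩ hz
    simp only [L, LinearMap.comp_apply, LinearMap.prodMap_apply, Submodule.subtype_apply, hQ]
    by_cases ha : (a : ι → ℝ) = 0
    · have hb : (b : κ → ℝ) ≠ 0 := fun hb => hz (by simp [L, ha, hb, ← Prod.zero_eq_mk])
      linarith [hAn' a a.2, hBn b b.2 hb]
    · linarith [hAn a a.2 ha, hBn' b b.2]
  · rintro _ ⟨⟨a, b⟩, rfl⟩
    simp only [L, LinearMap.comp_apply, LinearMap.prodMap_apply, Submodule.subtype_apply, hQ]
    linarith [hAp a a.2, hBp b b.2]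
  · rw [hrank, hrank]
    omega

end Inertia

lemma Matrix.IsHermitian.add_dotProduct_mulVec_add {V : Type*} [Fintype V] {M : Matrix V V ℝ}
    (hM : M.IsHermitian) (a b : V → ℝ) :
    (a + b) ⬝ᵥ (M *ᵥ (a + b)) = a ⬝ᵥ (M *ᵥ a) + 2 * (b ⬝ᵥ (M *ᵥ a)) + b ⬝ᵥ (M *ᵥ b) := by
  have hsymm : a ⬝ᵥ (M *ᵥ b) = b ⬝ᵥ (M *ᵥ a) := by
    rw [dotProduct_mulVec, ← mulVec_transpose, dotProduct_comm,
      ← conjTranspose_eq_transpose_of_trivial, hM.eq]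
  simp only [mulVec_add, add_dotProduct, dotProduct_add, hsymm]
  ring

lemma iNeg_smul_one_add_vecMulVec_one {ι : Type*} [Fintype ι] [DecidableEq ι] {μ : ℝ}
    (hμ : μ < 0) : iNeg (μ • (1 + vecMulVec 1 1) : Matrix ι ι ℝ) = Fintype.card ι := by
  refine iNeg_eq_card_of_neg (IsHermitian.ext fun i j => by simp [one_apply, eq_comm])
    fun y hy => ?_
  simp only [smul_mulVec, add_mulVec, one_mulVec, vecMulVec_mulVec, op_smul_eq_smul,
    dotProduct_smul, dotProduct_add, smul_eq_mul, dotProduct_comm 1 y]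
  exact mul_neg_of_neg_of_pos hμ <| add_pos_of_pos_of_nonneg
    (by simpa using dotProduct_self_star_pos_iff.mpr hy) (mul_self_nonneg _)

section SumSingleSub

variable {V ι : Type*} [DecidableEq V] [Fintype ι] {q : ι → V} {s : V}

variable (q s) in
noncomputable def sumSingleSub : (ι → ℝ) →ₗ[ℝ] V → ℝ :=
  Fintype.linearCombination ℝ fun i => Pi.single (q i) 1 - Pi.single s 1

lemma sumSingleSub_apply_left (hq : q.Injective) (hqs : ∀ i, q i ≠ s) (u : ι → ℝ) (j : ι) :
    sumSingleSub q s u (q j) = u j := by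
  classical
  simp [sumSingleSub, Fintype.linearCombination_apply, Pi.single_apply, hq.eq_iff, hqs j]

lemma sumSingleSub_apply_right (hqs : ∀ i, q i ≠ s) (u : ι → ℝ) :
    sumSingleSub q s u s = -∑ i, u i := by
  simp [sumSingleSub, Fintype.linearCombination_apply, (hqs _).symm]

lemma sumSingleSub_dotProduct [Fintype V] (u : ι → ℝ) (z : V → ℝ) :
    sumSingleSub q s u ⬝ᵥ z = u ⬝ᵥ fun i => z (q i) - z s := by
  simp only [sumSingleSub, Fintype.linearCombination_apply, sum_dotProduct, smul_dotProduct,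
    sub_dotProduct, single_dotProduct, one_mul, smul_eq_mul]
  rfl

lemma sumSingleSub_dotProduct_self [Fintype V] (hq : q.Injective) (hqs : ∀ i, q i ≠ s)
    (u : ι → ℝ) :
    sumSingleSub q s u ⬝ᵥ sumSingleSub q s u = u ⬝ᵥ u + (u ⬝ᵥ 1) ^ 2 := by
  have : (fun i => sumSingleSub q s u (q i) - sumSingleSub q s u s) = u + (u ⬝ᵥ 1) • 1 :=
    funext fun i => by simp [sumSingleSub_apply_left hq hqs, sumSingleSub_apply_right hqs,
      dotProduct_one]
  rw [sumSingleSub_dotProduct, this, dotProduct_add, dotProduct_smul, smul_eq_mul, sq]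

lemma mulVec_sumSingleSub [Fintype V] {M : Matrix V V ℝ} {μ : ℝ}
    (hMq : ∀ i, M *ᵥ (Pi.single (q i) 1 - Pi.single s 1) =
      μ • (Pi.single (q i) 1 - Pi.single s 1)) (u : ι → ℝ) :
    M *ᵥ sumSingleSub q s u = μ • sumSingleSub q s u := by
  simp only [sumSingleSub, Fintype.linearCombination_apply, mulVec_sum, mulVec_smul, hMq,
    Finset.smul_sum]
  exact Finset.sum_congr rfl fun i _ => smul_comm _ _ _

lemma sumSingleSub_add_extend_dotProduct_mulVec [Fintype V] {M : Matrix V V ℝ}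
    (hM : M.IsHermitian) (hq : q.Injective) (hqs : ∀ i, q i ≠ s) {S : Set V} [Fintype S] (hqS : ∀ i, q i ∉ S)
    (hsS : s ∈ S) {μ : ℝ} (hMq : ∀ i, M *ᵥ (Pi.single (q i) 1 - Pi.single s 1) =
      μ • (Pi.single (q i) 1 - Pi.single s 1)) (u : ι → ℝ) (x : S → ℝ) :
    let z := sumSingleSub q s u + Function.extend Subtype.val x 0
    z ⬝ᵥ (M *ᵥ z) = μ * (u ⬝ᵥ u + (u ⬝ᵥ 1) ^ 2) - 2 * μ * x ⟨s, hsS⟩ * (u ⬝ᵥ 1) +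
      x ⬝ᵥ (M.submatrix (↑) (↑) *ᵥ x) := by
  intro z
  have hx : (fun i => Function.extend Subtype.val x 0 (q i) -
      Function.extend Subtype.val x 0 s) = (-x ⟨s, hsS⟩) • 1 := funext fun i => by
    rw [Function.extend_apply' _ _ _ fun ⟨v, hv⟩ => hqS i (hv ▸ v.2),
      ← Subtype.val_injective.extend_apply x 0 ⟨s, hsS⟩]
    simp
  rw [hM.add_dotProduct_mulVec_add, mulVec_sumSingleSub hMq, dotProduct_smul, dotProduct_smul,
    smul_eq_mul, smul_eq_mul, sumSingleSub_dotProduct_self hq hqs,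
    dotProduct_comm (Function.extend _ _ _), sumSingleSub_dotProduct, hx, dotProduct_smul, smul_eq_mul,
    dotProduct_mulVec_extend Subtype.val_injective]
  ring

end SumSingleSub

lemma Fintype.card_le_card_add_card_of_forall_notMem {V ι : Type*} [Fintype V] [Fintype ι]
    {q : ι → V} {S : Set V} [Fintype S] (hS : ∀ v, v ∉ S → ∃ i, v = q i) :
    Fintype.card V ≤ Fintype.card ι + Fintype.card S := by
  rw [← Fintype.card_sum]
  refine Fintype.card_le_of_surjective (Sum.elim q Subtype.val) fun v => ?_
  by_cases hv : v ∈ S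
  · exact ⟨.inr ⟨v, hv⟩, rfl⟩
  · obtain ⟨i, rfl⟩ := hS v hv
    exact ⟨.inl i, rfl⟩

theorem iNeg_eq_card_add_iNeg_submatrix_of_mulVec_single_sub_single {V ι : Type*} [Fintype V]
    [DecidableEq V] [Fintype ι] [DecidableEq ι] {M : Matrix V V ℝ} (hM : M.IsHermitian)
    {q : ι → V} (hq : q.Injective) {s : V} (hqs : ∀ i, q i ≠ s) {S : Set V} [Fintype S]
    (hS : ∀ v, v ∈ S ↔ ∀ i, v ≠ q i) {μ : ℝ} (hμ : μ < 0)
    (hMq : ∀ i, M *ᵥ (Pi.single (q i) 1 - Pi.single s 1) =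
      μ • (Pi.single (q i) 1 - Pi.single s 1)) :
    iNeg M = Fintype.card ι + iNeg (M.submatrix (↑) (↑) +
      (μ / (Fintype.card ι + 1) - μ) •
        vecMulVec (fun v : S => if (v : V) = s then (1 : ℝ) else 0)
          (fun v : S => if (v : V) = s then (1 : ℝ) else 0)) := by
  set m : ℝ := (Fintype.card ι : ℝ) with hm
  have hsS : s ∈ S := (hS s).2 fun i => (hqs i).symm
  have hqS (i) : q i ∉ S := fun h => (hS _).1 h i rfl
  set s' : S := ⟨s, hsS⟩
  -- `T (0, x)` agrees with `x` away from `s` and the `q i`, and equals `x s' / (m + 1)` at all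
  -- of them; being constant there, it is `M`-orthogonal to the range of `sumSingleSub q s`.
  set T : (ι → ℝ) × (S → ℝ) →ₗ[ℝ] V → ℝ := (sumSingleSub q s).coprod
    (Function.ExtendByZero.linearMap ℝ Subtype.val +
      ((m + 1)⁻¹ • LinearMap.proj s').smulRight (sumSingleSub q s 1))
  have hT (y x) : T (y, x) =
      sumSingleSub q s (y + (x s' / (m + 1)) • 1) + Function.extend Subtype.val x 0 := by
    simp only [T, LinearMap.coprod_apply, LinearMap.add_apply, LinearMap.smulRight_apply,
      LinearMap.smul_apply, LinearMap.proj_apply, map_add, map_smul]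
    rw [div_eq_inv_mul, smul_eq_mul, add_assoc, add_comm (_ • _)]
    rfl
  have hXq (x : S → ℝ) (j) : Function.extend Subtype.val x 0 (q j) = 0 :=
    Function.extend_apply' _ _ _ fun ⟨v, hv⟩ => hqS j (hv ▸ v.2)
  have hTinj : Function.Injective T := by
    rw [← LinearMap.ker_eq_bot, LinearMap.ker_eq_bot']
    rintro ⟨y, x⟩ h0
    rw [hT] at h0
    have hu : y + (x s' / (m + 1)) • 1 = 0 := funext fun j => by
      simpa [sumSingleSub_apply_left hq hqs, hXq] using congrFun h0 (q j)
    obtain rfl : x = 0 := Function.extend_injective Subtype.val_injective (0 : V → ℝ) <|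
      (by simpa [hu] using h0 : Function.extend Subtype.val x (0 : V → ℝ) = 0).trans
        (Function.extend_const _ _).symm
    simpa using hu
  rw [← iNeg_smul_one_add_vecMulVec_one (ι := ι) hμ]
  refine iNeg_eq_add_of_injective hM (IsHermitian.ext fun i j => by simp [one_apply, eq_comm])
    ((hM.submatrix _).add <| (IsHermitian.ext fun i j => by
      simp [vecMulVec_apply, mul_comm]).smul (.all _)) T hTinj
    (Fintype.card_le_card_add_card_of_forall_notMem fun v hv => by simpa [hS] using hv)
    fun y x => ?_
  have he : (fun v : S => if (v : V) = s then (1 : ℝ) else 0) = Pi.single s' 1 :=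
    funext fun v => by simp [Pi.single_apply, s', ← Subtype.val_inj]
  rw [hT, sumSingleSub_add_extend_dotProduct_mulVec hM hq hqs hqS hsS hMq]
  simp only [smul_mulVec, add_mulVec, one_mulVec, vecMulVec_mulVec, op_smul_eq_smul,
    dotProduct_smul, dotProduct_add, smul_eq_mul, add_dotProduct, smul_dotProduct, he,
    dotProduct_single, single_dotProduct, one_dotProduct_one, dotProduct_comm 1 y, mul_one,
    one_mul, ← hm]
  have hm1 : m + 1 ≠ 0 := by positivity
  field_simp
  ring

namespace SimpleGraph

variable {V : Type*} {G : SimpleGraph V} {w x : V}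

lemma eq_of_adj_of_neighborSet_eq_singleton (hx : G.neighborSet x = {w}) {y : V}
    (hy : G.Adj x y) : y = w := by
  rw [← Set.mem_singleton_iff, ← hx]
  exact hy

lemma dist_eq_dist_add_one_of_neighborSet_eq_singleton (hx : G.neighborSet x = {w}) {v : V}
    (hv : v ≠ x) (h : G.Reachable x v) : G.dist x v = G.dist w v + 1 := by
  have hxw : G.Adj x w := by rw [← mem_neighborSet, hx]; rfl
  obtain ⟨p, hp⟩ := h.exists_walk_length_eq_dist
  cases p with
  | nil => exact absurd rfl hv
  | @cons _ b _ hxb p =>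
    obtain rfl := eq_of_adj_of_neighborSet_eq_singleton hx hxb
    have := hxw.reachable.dist_triangle_left v
    rw [dist_eq_one_iff_adj.mpr hxw] at this
    have := dist_le p
    simp only [Walk.length_cons] at hp
    omega

lemma Walk.IsPath.notMem_support_of_neighborSet_eq_singleton {a b : V} {p : G.Walk a b}
    (hp : p.IsPath) (hx : G.neighborSet x = {w}) (ha : a ≠ x) (hb : b ≠ x) :
    x ∉ p.support := by
  intro hmem
  obtain ⟨r, t, rfl⟩ := Walk.mem_support_iff_exists_append.mp hmem
  have hr : ¬ r.Nil := fun h => ha h.eq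
  have ht : ¬ t.Nil := fun h => hb h.eq.symm
  have hrw := eq_of_adj_of_neighborSet_eq_singleton hx (r.adj_penultimate hr).symm
  have htw := eq_of_adj_of_neighborSet_eq_singleton hx (t.adj_snd ht)
  have hnodup := hp.support_nodup
  rw [Walk.support_append, List.nodup_append] at hnodup
  exact hnodup.2.2 _ (hrw ▸ r.getVert_mem_support _) _ (htw ▸ t.snd_mem_tail_support ht) rfl

lemma dist_induce_eq_of_neighborSet_eq_singleton {s : Set V}
    (hs : ∀ x ∉ s, ∃ w, G.neighborSet x = {w}) {u v : V} (hu : u ∈ s) (hv : v ∈ s)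
    (h : G.Reachable u v) : (G.induce s).dist ⟨u, hu⟩ ⟨v, hv⟩ = G.dist u v := by
  obtain ⟨p, hp, hlen⟩ := h.exists_path_of_dist
  have hsupp : ∀ y ∈ p.support, y ∈ s := fun y hy => by
    by_contra hys
    obtain ⟨w, hw⟩ := hs y hys
    exact hp.notMem_support_of_neighborSet_eq_singleton hw (fun h => hys (h ▸ hu))
      (fun h => hys (h ▸ hv)) hy
  set p' := p.induce s hsupp
  have hle : (G.induce s).dist ⟨u, hu⟩ ⟨v, hv⟩ ≤ G.dist u v := by
    have hlen' : p'.length = p.length := by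
      rw [← Walk.length_map (Embedding.induce s).toHom p', Walk.map_induce]
      rfl
    rw [← hlen, ← hlen']
    exact dist_le p'
  obtain ⟨r, hr⟩ := p'.reachable.exists_walk_length_eq_dist
  have hge := dist_le (r.map (Embedding.induce s).toHom)
  rw [Walk.length_map, hr] at hge
  exact le_antisymm hle hge

variable [Fintype V]

lemma isHermitian_distSqMatrix (G : SimpleGraph V) : (distSqMatrix G).IsHermitian :=
  IsHermitian.ext fun i j => by simp [distSqMatrix, dist_comm]

lemma distSqMatrix_induce_eq_submatrix (hG : G.Connected) {s : Set V} [Fintype s]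
    (hs : ∀ x ∉ s, ∃ w, G.neighborSet x = {w}) :
    distSqMatrix (G.induce s) = (distSqMatrix G).submatrix (↑) (↑) := by
  ext u v
  simp only [distSqMatrix, of_apply, submatrix_apply]
  rw [← dist_induce_eq_of_neighborSet_eq_singleton hs u.2 v.2 (hG.preconnected u v)]

lemma distSqMatrix_mulVec_single_sub_single [DecidableEq V] (hG : G.Connected) {a b : V}
    (ha : G.neighborSet a = {w}) (hb : G.neighborSet b = {w}) (hab : a ≠ b) :
    distSqMatrix G *ᵥ (Pi.single a 1 - Pi.single b 1) =
      (-4 : ℝ) • (Pi.single a 1 - Pi.single b 1) := by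
  have hdist {x : V} (hx : G.neighborSet x = {w}) (v : V) (hv : v ≠ x) :
      G.dist v x = G.dist w v + 1 := by
    rw [dist_comm, dist_eq_dist_add_one_of_neighborSet_eq_singleton hx hv (hG.preconnected x v)]
  have hw {x : V} (hx : G.neighborSet x = {w}) : G.dist w x = 1 := by
    rw [dist_comm, dist_eq_one_iff_adj, ← mem_neighborSet, hx]
    rfl
  ext v
  simp only [mulVec_sub, mulVec_single_one, distSqMatrix, Pi.sub_apply, col_apply, of_apply,
    Pi.smul_apply, Pi.single_apply, smul_eq_mul]
  by_cases hva : v = a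
  · subst hva
    rw [hdist hb v hab, hw ha]
    simp [hab]
    norm_num
  by_cases hvb : v = b
  · subst hvb
    rw [hdist ha v hva, hw hb]
    simp [hva]
    norm_num
  rw [hdist ha v hva, hdist hb v hvb]
  simp [hva, hvb]

end SimpleGraph

/-- attaching `k ≥ 2` pendant vertices `p 0, …, p (k-1)` to a vertex `w`
of a connected graph `G'` (the induced subgraph of `G` on the non-pendant vertices). -/
theorem stmt0 {n k : ℕ} (hk : 2 ≤ k)
    (G : SimpleGraph (Fin n)) (hG : G.Connected)
    (w : Fin n) (p : Fin k → Fin n) (hp : Function.Injective p)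
    (hpend : ∀ i, G.neighborSet (p i) = {w}) :
    iNeg (distSqMatrix G) =
      (k - 1) +
      iNeg (distSqMatrix (G.induce {v : Fin n | ∀ i : Fin k, (i : ℕ) < k - 1 → v ≠ p i}) +
        (4 - 4 / (k : ℝ)) •
          Matrix.vecMulVec
            (fun v : {v : Fin n | ∀ i : Fin k, (i : ℕ) < k - 1 → v ≠ p i} =>
              if (v : Fin n) = p ⟨k - 1, by omega⟩ then (1 : ℝ) else 0)
            (fun v : {v : Fin n | ∀ i : Fin k, (i : ℕ) < k - 1 → v ≠ p i} =>
              if (v : Fin n) = p ⟨k - 1, by omega⟩ then (1 : ℝ) else 0)) := by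
  set q : Fin (k - 1) → Fin n := fun i => p (Fin.castLE (by omega) i)
  have hq : Function.Injective q := hp.comp (Fin.castLE_injective _)
  have hqs (i : Fin (k - 1)) : q i ≠ p ⟨k - 1, by omega⟩ := fun h => by
    have := congrArg Fin.val (hp h)
    simp only [Fin.val_castLE] at this
    omega
  have hS (v : Fin n) :
      v ∈ {v : Fin n | ∀ i : Fin k, (i : ℕ) < k - 1 → v ≠ p i} ↔ ∀ i, v ≠ q i :=
    ⟨fun h i => h _ i.2, fun h i hi => h ⟨i, hi⟩⟩
  have hpendS (x) (hx : x ∉ {v : Fin n | ∀ i : Fin k, (i : ℕ) < k - 1 → v ≠ p i}) :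
      ∃ w, G.neighborSet x = {w} := by
    obtain ⟨i, -, rfl⟩ : ∃ i : Fin k, (i : ℕ) < k - 1 ∧ x = p i := by simpa using hx
    exact ⟨w, hpend i⟩
  have hcoef : (4 - 4 / (k : ℝ)) = -4 / (Fintype.card (Fin (k - 1)) + 1 : ℝ) - -4 := by
    rw [Fintype.card_fin, Nat.cast_sub (by omega)]
    ring
  rw [SimpleGraph.distSqMatrix_induce_eq_submatrix hG hpendS, hcoef,
    iNeg_eq_card_add_iNeg_submatrix_of_mulVec_single_sub_single
      (SimpleGraph.isHermitian_distSqMatrix G) hq hqs hS (by norm_num : (-4 : ℝ) < 0)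
      fun i => SimpleGraph.distSqMatrix_mulVec_single_sub_single hG (hpend _) (hpend _) (hqs i),
    Fintype.card_fin]
end

section
/- Let G' be a connected simple graph with a distinguished vertex w, and let G be the connected graph obtained from G' by attaching k ≥ 2 new pendant vertices, labeled 1,…,k, each adjacent only to w. Let Δ be the distance squared matrix of G and let Δ_{k+1} be the distance squared matrix of G \ {1,…,k} = G'. Then either i_-(Δ) = (k − 1) + i_-(Δ_{k+1}) or i_-(Δ) = k + i_-(Δ_{k+1}). -/
/-!
The negative inertia index `i₋(M)` is the largest dimension of a subspace on which
`x ↦ xᵀ M x` is negative definite. List the pendant vertices first: then `Δ` has the block form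
`[[4 (J - I), 𝟙 fᵀ], [f 𝟙ᵀ, Δ']]` with `f v = (d(w, v) + 1)²`. On vectors whose pendant part `c`
sums to zero the off-diagonal blocks contribute nothing and the form is `-4 ‖c‖² + uᵀ Δ' u`,
which gives a negative definite subspace of dimension `(k - 1) + i₋(Δ')`. Conversely, a negative
definite subspace for `Δ` meets `{c = 0}` in codimension at most `k`, and there the form is that
of `Δ'`, so `i₋(Δ) ≤ k + i₋(Δ')`.
-/

open Matrix

def IsNegDefOn {V : Type*} [Fintype V] (M : Matrix V V ℝ) (W : Submodule ℝ (V → ℝ)) : Prop :=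
  ∀ x ∈ W, x ≠ 0 → x ⬝ᵥ M *ᵥ x < 0

lemma IsNegDefOn.dotProduct_mulVec_self_nonpos {V : Type*} [Fintype V] {M : Matrix V V ℝ}
    {W : Submodule ℝ (V → ℝ)} (hW : IsNegDefOn M W) {x : V → ℝ} (hx : x ∈ W) :
    x ⬝ᵥ M *ᵥ x ≤ 0 := by
  rcases eq_or_ne x 0 with rfl | hne
  · simp
  · exact (hW x hx hne).le

namespace Matrix.IsHermitian

variable {V : Type*} [Fintype V] [DecidableEq V] {M : Matrix V V ℝ} (hM : M.IsHermitian)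
include hM

lemma iNeg_eq_card : iNeg M = Fintype.card {i // hM.eigenvalues i < 0} := by
  rw [iNeg, dif_pos hM, Fintype.card_subtype]

lemma star_mulVec_eigenvectorUnitary_mulVec (y : V → ℝ) :
    star (hM.eigenvectorUnitary : Matrix V V ℝ) *ᵥ
      ((hM.eigenvectorUnitary : Matrix V V ℝ) *ᵥ y) = y := by
  rw [mulVec_mulVec, Unitary.star_mul_self_of_mem hM.eigenvectorUnitary.2, one_mulVec]

lemma dotProduct_mulVec_self_eq_sum (x : V → ℝ) :
    x ⬝ᵥ M *ᵥ x = ∑ i, hM.eigenvalues i *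
      (star (hM.eigenvectorUnitary : Matrix V V ℝ) *ᵥ x) i ^ 2 := by
  set U := (hM.eigenvectorUnitary : Matrix V V ℝ)
  have hM' : M = U * diagonal hM.eigenvalues * star U := by
    simpa using hM.spectral_theorem
  have hxU : x ᵥ* U = star U *ᵥ x := by
    rw [star_eq_conjTranspose, conjTranspose_eq_transpose_of_trivial, mulVec_transpose]
  conv_lhs => rw [hM', ← mulVec_mulVec, ← mulVec_mulVec, dotProduct_mulVec, hxU]
  simp only [dotProduct, mulVec_diagonal]
  exact Finset.sum_congr rfl fun i _ => by ring

lemma finrank_le_iNeg {W : Submodule ℝ (V → ℝ)} (hW : IsNegDefOn M W) :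
    Module.finrank ℝ W ≤ iNeg M := by
  set U := (hM.eigenvectorUnitary : Matrix V V ℝ)
  let coords : W →ₗ[ℝ] ({i // hM.eigenvalues i < 0} → ℝ) :=
    LinearMap.funLeft ℝ ℝ Subtype.val ∘ₗ mulVecLin (star U) ∘ₗ W.subtype
  have hcoords : Function.Injective coords := by
    rw [← LinearMap.ker_eq_bot, LinearMap.ker_eq_bot']
    rintro ⟨x, hx⟩ hzero
    by_contra hne
    refine (hW x hx fun h => hne (by simp [h])).not_ge ?_
    rw [hM.dotProduct_mulVec_self_eq_sum]
    refine Finset.sum_nonneg fun i _ => ?_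
    by_cases hi : hM.eigenvalues i < 0
    · have : (star U *ᵥ x) i = 0 := congrFun hzero ⟨i, hi⟩
      simp [U, this]
    · exact mul_nonneg (not_lt.mp hi) (sq_nonneg _)
  simpa [hM.iNeg_eq_card] using LinearMap.finrank_le_finrank_of_injective hcoords

lemma exists_isNegDefOn_finrank_eq_iNeg :
    ∃ W : Submodule ℝ (V → ℝ), IsNegDefOn M W ∧ Module.finrank ℝ W = iNeg M := by
  set U := (hM.eigenvectorUnitary : Matrix V V ℝ)
  let s := {i // hM.eigenvalues i < 0}
  have hextend (y : s → ℝ) (i : V) : Function.extend Subtype.val y 0 i =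
      if hi : hM.eigenvalues i < 0 then y ⟨i, hi⟩ else 0 := by
    split_ifs with hi
    · exact Subtype.val_injective.extend_apply y 0 ⟨i, hi⟩
    · exact Function.extend_apply' _ _ _ fun ⟨j, hj⟩ => hi (hj ▸ j.2)
  -- `L` parametrizes the span of the eigenvectors with negative eigenvalue
  let L : (s → ℝ) →ₗ[ℝ] (V → ℝ) :=
    mulVecLin U ∘ₗ Function.ExtendByZero.linearMap ℝ Subtype.val
  have hcoords (y : s → ℝ) : star U *ᵥ L y = Function.extend Subtype.val y 0 :=
    hM.star_mulVec_eigenvectorUnitary_mulVec _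
  have hL : Function.Injective L := by
    intro y z hyz
    have h := congrArg (star U *ᵥ ·) hyz
    simp only [hcoords] at h
    funext j
    simpa [hextend, j.2] using congrFun h j.1
  refine ⟨LinearMap.range L, ?_, ?_⟩
  · rintro _ ⟨y, rfl⟩ hne
    obtain ⟨j, hj⟩ := Function.ne_iff.mp fun h : y = 0 => hne (by simp [h])
    rw [hM.dotProduct_mulVec_self_eq_sum, hcoords]
    simp only [hextend]
    refine Finset.sum_neg' (fun i _ => ?_) ⟨j.1, Finset.mem_univ _, ?_⟩
    · split_ifs with hi
      · exact mul_nonpos_of_nonpos_of_nonneg hi.le (sq_nonneg _)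
      · simp
    · rw [dif_pos j.2]
      exact mul_neg_of_neg_of_pos j.2 (pow_two_pos_of_ne_zero hj)
  · rw [LinearMap.finrank_range_of_inj hL, Module.finrank_fintype_fun_eq_card, hM.iNeg_eq_card]

lemma iNeg_le_iNeg_submatrix_equiv {V' : Type*} [Fintype V'] [DecidableEq V'] (e : V' ≃ V) :
    iNeg M ≤ iNeg (M.submatrix e e) := by
  obtain ⟨W, hW, hWdim⟩ := hM.exists_isNegDefOn_finrank_eq_iNeg
  let L := LinearEquiv.funCongrLeft ℝ ℝ e
  have hneg : IsNegDefOn (M.submatrix e e) (W.map L.toLinearMap) := by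
    rintro _ ⟨x, hx, rfl⟩ hne
    have hq : (x ∘ e) ⬝ᵥ M.submatrix e e *ᵥ (x ∘ e) = x ⬝ᵥ M *ᵥ x := by
      rw [submatrix_mulVec_equiv, Function.comp_assoc, e.self_comp_symm, Function.comp_id,
        comp_equiv_dotProduct_comp_equiv]
    refine hq ▸ hW x hx fun h => hne ?_
    simp [h]
  rw [← hWdim, ← LinearEquiv.finrank_map_eq L W]
  exact (hM.submatrix e).finrank_le_iNeg hneg

lemma iNeg_submatrix_equiv {V' : Type*} [Fintype V'] [DecidableEq V'] (e : V' ≃ V) :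
    iNeg (M.submatrix e e) = iNeg M :=
  le_antisymm (by simpa using (hM.submatrix e).iNeg_le_iNeg_submatrix_equiv e.symm)
    (hM.iNeg_le_iNeg_submatrix_equiv e)

end Matrix.IsHermitian

section Blocks

variable {α β : Type*} [Fintype α] [Fintype β]
  {A : Matrix α α ℝ} {B : Matrix α β ℝ} {C : Matrix β α ℝ} {D : Matrix β β ℝ}

lemma sumElim_dotProduct_fromBlocks_mulVec_sumElim (c : α → ℝ) (u : β → ℝ) :
    Sum.elim c u ⬝ᵥ fromBlocks A B C D *ᵥ Sum.elim c u =
      c ⬝ᵥ A *ᵥ c + c ⬝ᵥ B *ᵥ u + (u ⬝ᵥ C *ᵥ c + u ⬝ᵥ D *ᵥ u) := by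
  simp [fromBlocks_mulVec, sumElim_dotProduct_sumElim, dotProduct_add]

variable [DecidableEq α] [DecidableEq β]

lemma iNeg_fromBlocks_le (hM : (fromBlocks A B C D).IsHermitian) (hD : D.IsHermitian) :
    iNeg (fromBlocks A B C D) ≤ Fintype.card α + iNeg D := by
  obtain ⟨W, hW, hWdim⟩ := hM.exists_isNegDefOn_finrank_eq_iNeg
  let top : W →ₗ[ℝ] (α → ℝ) := LinearMap.funLeft ℝ ℝ Sum.inl ∘ₗ W.subtype
  let bottom : LinearMap.ker top →ₗ[ℝ] (β → ℝ) :=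
    LinearMap.funLeft ℝ ℝ Sum.inr ∘ₗ W.subtype ∘ₗ (LinearMap.ker top).subtype
  have hsplit (x : LinearMap.ker top) :
      ((x : W) : α ⊕ β → ℝ) = Sum.elim (0 : α → ℝ) (bottom x) := by
    rw [← Sum.elim_comp_inl_inr ((x : W) : α ⊕ β → ℝ)]
    congr
    exact x.2
  have hbottom : Function.Injective bottom := by
    intro x y hxy
    exact Subtype.ext (Subtype.ext (by rw [hsplit x, hsplit y, hxy]))
  have hneg : IsNegDefOn D (LinearMap.range bottom) := by
    rintro _ ⟨x, rfl⟩ hne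
    have h := hW _ (x : W).2 fun h0 => hne (by simpa [hsplit x] using congrArg (· ∘ Sum.inr) h0)
    simpa [hsplit x, sumElim_dotProduct_fromBlocks_mulVec_sumElim] using h
  have hrank := LinearMap.finrank_range_add_finrank_ker top
  have htop : Module.finrank ℝ (LinearMap.range top) ≤ Fintype.card α :=
    (Submodule.finrank_le _).trans_eq (Module.finrank_fintype_fun_eq_card ℝ)
  have hker := hD.finrank_le_iNeg hneg
  rw [LinearMap.finrank_range_of_inj hbottom] at hker
  omega

lemma finrank_add_iNeg_le_iNeg_fromBlocks (hM : (fromBlocks A B C D).IsHermitian)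
    (hD : D.IsHermitian) {K : Submodule ℝ (α → ℝ)} (hA : IsNegDefOn A K)
    (hB : ∀ c ∈ K, c ᵥ* B = 0) (hC : ∀ c ∈ K, C *ᵥ c = 0) :
    Module.finrank ℝ K + iNeg D ≤ iNeg (fromBlocks A B C D) := by
  obtain ⟨W, hW, hWdim⟩ := hD.exists_isNegDefOn_finrank_eq_iNeg
  let L : K × W →ₗ[ℝ] (α ⊕ β → ℝ) :=
    (LinearEquiv.sumArrowLequivProdArrow α β ℝ ℝ).symm.toLinearMap ∘ₗ
      K.subtype.prodMap W.subtype
  have hL : Function.Injective L := by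
    simp only [L, LinearMap.coe_comp, LinearEquiv.coe_coe, LinearMap.coe_prodMap,
      Submodule.coe_subtype]
    exact (LinearEquiv.injective _).comp (Subtype.val_injective.prodMap Subtype.val_injective)
  have hneg : IsNegDefOn (fromBlocks A B C D) (LinearMap.range L) := by
    rintro _ ⟨⟨⟨c, hc⟩, ⟨u, hu⟩⟩, rfl⟩ hne
    have hLcu : L (⟨c, hc⟩, ⟨u, hu⟩) = Sum.elim c u := by
      ext (i | j) <;> rfl
    rw [hLcu, sumElim_dotProduct_fromBlocks_mulVec_sumElim, dotProduct_mulVec c B, hB c hc,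
      hC c hc, zero_dotProduct, dotProduct_zero, add_zero, zero_add]
    have hA' := hA.dotProduct_mulVec_self_nonpos hc
    have hD' := hW.dotProduct_mulVec_self_nonpos hu
    rcases eq_or_ne c 0 with rfl | hc0
    · have hu0 : u ≠ 0 := by rintro rfl; exact hne (by rw [hLcu, Sum.elim_zero_zero])
      linarith [hW u hu hu0]
    · linarith [hA c hc hc0]
  have := hM.finrank_le_iNeg hneg
  rwa [LinearMap.finrank_range_of_inj hL, Module.finrank_prod, hWdim] at this

end Blocks

section SumZero

variable (ι : Type*) [Fintype ι]

def sumZeroSubmodule : Submodule ℝ (ι → ℝ) :=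
  LinearMap.ker (∑ i, LinearMap.proj i : (ι → ℝ) →ₗ[ℝ] ℝ)

variable {ι}

lemma mem_sumZeroSubmodule {c : ι → ℝ} : c ∈ sumZeroSubmodule ι ↔ ∑ i, c i = 0 := by
  simp [sumZeroSubmodule]

lemma card_sub_one_le_finrank_sumZeroSubmodule :
    Fintype.card ι - 1 ≤ Module.finrank ℝ (sumZeroSubmodule ι) := by
  have hrank := LinearMap.finrank_range_add_finrank_ker
    (∑ i, LinearMap.proj i : (ι → ℝ) →ₗ[ℝ] ℝ)
  have hrange := Submodule.finrank_le
    (LinearMap.range (∑ i, LinearMap.proj i : (ι → ℝ) →ₗ[ℝ] ℝ))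
  rw [Module.finrank_fintype_fun_eq_card] at hrank
  rw [Module.finrank_self] at hrange
  unfold sumZeroSubmodule
  omega

lemma isNegDefOn_sumZeroSubmodule [DecidableEq ι] {a : ℝ} (ha : 0 < a) :
    IsNegDefOn (of fun i j : ι => if i = j then 0 else a) (sumZeroSubmodule ι) := by
  intro c hc hne
  rw [mem_sumZeroSubmodule] at hc
  have hAc : (of fun i j : ι => if i = j then 0 else a) *ᵥ c = -a • c := by
    ext i
    have : ∀ j, (if i = j then 0 else a) * c j = a * c j - if i = j then a * c i else 0 := by
      intro j
      split_ifs with h <;> simp [h]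
    simp [mulVec, dotProduct, this, Finset.sum_sub_distrib, ← Finset.mul_sum, hc]
  obtain ⟨i, hi⟩ := Function.ne_iff.mp hne
  have hcc : 0 < c ⬝ᵥ c :=
    Finset.sum_pos' (fun j _ => mul_self_nonneg (c j)) ⟨i, Finset.mem_univ _, mul_self_pos.mpr hi⟩
  rw [hAc, dotProduct_smul, smul_eq_mul]
  nlinarith

variable {β : Type*}

lemma vecMul_replicateRow_eq_sum_smul (c : ι → ℝ) (f : β → ℝ) :
    c ᵥ* replicateRow ι f = (∑ i, c i) • f := by
  ext v
  simp [vecMul, dotProduct, Finset.sum_mul]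

lemma replicateCol_mulVec_eq_sum_smul (f : β → ℝ) (c : ι → ℝ) :
    replicateCol ι f *ᵥ c = (∑ i, c i) • f := by
  ext v
  simp [mulVec, dotProduct, Finset.mul_sum, mul_comm]

end SumZero

namespace SimpleGraph

variable {V : Type*} {G : SimpleGraph V} {a w : V}

lemma adj_iff_of_neighborSet_eq (h : G.neighborSet a = {w}) {x : V} : G.Adj a x ↔ x = w :=
  Set.ext_iff.mp h x

lemma exists_walk_length_succ_of_neighborSet_eq (h : G.neighborSet a = {w}) {v : V}
    (hv : v ≠ a) (q : G.Walk a v) : ∃ q' : G.Walk w v, q'.length + 1 = q.length := by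
  cases q with
  | nil => exact absurd rfl hv
  | cons hadj q' =>
    obtain rfl := (adj_iff_of_neighborSet_eq h).mp hadj
    exact ⟨q', rfl⟩

lemma dist_eq_two_of_neighborSet_eq {b : V} (ha : G.neighborSet a = {w})
    (hb : G.neighborSet b = {w}) (hab : a ≠ b) : G.dist a b = 2 := by
  have haw : G.Adj a w := (adj_iff_of_neighborSet_eq ha).mpr rfl
  have hwb : G.Adj w b := ((adj_iff_of_neighborSet_eq hb).mpr rfl).symm
  let q : G.Walk a b := .cons haw (.cons hwb .nil)
  have hle : G.dist a b ≤ 2 := dist_le q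
  have hpos : 0 < G.dist a b := q.reachable.pos_dist_of_ne hab
  have hne : G.dist a b ≠ 1 := fun h1 =>
    hwb.ne ((adj_iff_of_neighborSet_eq ha).mp (dist_eq_one_iff_adj.mp h1)).symm
  omega

lemma dist_eq_dist_add_one_of_neighborSet_eq (hG : G.Connected) (h : G.neighborSet a = {w})
    {v : V} (hv : v ≠ a) : G.dist a v = G.dist w v + 1 := by
  obtain ⟨q, hq⟩ := hG.exists_walk_length_eq_dist w v
  obtain ⟨r, hr⟩ := hG.exists_walk_length_eq_dist a v
  obtain ⟨r', hr'⟩ := exists_walk_length_succ_of_neighborSet_eq h hv r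
  have hle := dist_le (q.cons ((adj_iff_of_neighborSet_eq h).mpr rfl))
  have hge := dist_le r'
  rw [Walk.length_cons] at hle
  omega

lemma notMem_support_of_length_eq_dist (h : G.neighborSet a = {w}) {u v : V} (hu : u ≠ a)
    (hv : v ≠ a) (q : G.Walk u v) (hq : q.length = G.dist u v) : a ∉ q.support := by
  classical
  intro ha
  obtain ⟨r, hr⟩ := exists_walk_length_succ_of_neighborSet_eq h hu (q.takeUntil a ha).reverse
  obtain ⟨s, hs⟩ := exists_walk_length_succ_of_neighborSet_eq h hv (q.dropUntil a ha)
  have hlen := congrArg Walk.length (q.take_spec ha)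
  have hshort := dist_le (r.reverse.append s)
  simp only [Walk.length_append, Walk.length_reverse] at hlen hr hshort
  omega

lemma dist_induce_eq_of_pendant_compl (hG : G.Connected) {S : Set V}
    (hS : ∀ a ∉ S, ∃ w, G.neighborSet a = {w}) {u v : V} (hu : u ∈ S) (hv : v ∈ S) :
    (G.induce S).dist ⟨u, hu⟩ ⟨v, hv⟩ = G.dist u v := by
  obtain ⟨q, hq⟩ := hG.exists_walk_length_eq_dist u v
  have hqS : ∀ x ∈ q.support, x ∈ S := fun x hx => by
    by_contra hxS
    obtain ⟨w, hw⟩ := hS x hxS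
    exact notMem_support_of_length_eq_dist hw (ne_of_mem_of_not_mem hu hxS)
      (ne_of_mem_of_not_mem hv hxS) q hq hx
  let Q := q.induce S hqS
  have hQ : Q.length = q.length := by
    rw [← Walk.length_map (Embedding.induce S).toHom, q.map_induce hqS]
    rfl
  obtain ⟨R, hR⟩ := Q.reachable.exists_walk_length_eq_dist
  have hle := dist_le Q
  have hge : G.dist u v ≤ R.length := by
    have := dist_le (R.map (Embedding.induce S).toHom)
    rwa [Walk.length_map] at this
  omega

end SimpleGraph

noncomputable def sumEquivOfInjective {ι V : Type*} {p : ι → V} (hp : Function.Injective p) :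
    ι ⊕ {v : V | ∀ i, v ≠ p i} ≃ V :=
  Equiv.ofBijective (Sum.elim p Subtype.val)
    ⟨hp.sumElim Subtype.val_injective fun i v h => v.2 i h.symm, fun v => by
      by_cases hv : ∀ i, v ≠ p i
      · exact ⟨.inr ⟨v, hv⟩, rfl⟩
      · obtain ⟨i, hi⟩ := not_forall.mp hv
        exact ⟨.inl i, (not_not.mp hi).symm⟩⟩

lemma isHermitian_distSqMatrix {V : Type*} [Fintype V] (G : SimpleGraph V) :
    (distSqMatrix G).IsHermitian := by
  ext i j
  simp [distSqMatrix, SimpleGraph.dist_comm]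

lemma distSqMatrix_submatrix_sumEquivOfInjective {V ι : Type*} [Fintype V] [DecidableEq ι]
    {G : SimpleGraph V} (hG : G.Connected) {w : V} {p : ι → V} (hp : Function.Injective p)
    [Fintype {v | ∀ i, v ≠ p i}] (hpend : ∀ i, G.neighborSet (p i) = {w}) :
    (distSqMatrix G).submatrix (sumEquivOfInjective hp) (sumEquivOfInjective hp) =
      fromBlocks (of fun i j => if i = j then 0 else 4)
        (replicateRow ι fun v : {v | ∀ i, v ≠ p i} => ((G.dist w v + 1 : ℕ) : ℝ) ^ 2)
        (replicateCol ι fun v : {v | ∀ i, v ≠ p i} => ((G.dist w v + 1 : ℕ) : ℝ) ^ 2)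
        (distSqMatrix (G.induce {v | ∀ i, v ≠ p i})) := by
  ext (i | v) (j | v')
  · by_cases hij : i = j
    · simp [sumEquivOfInjective, distSqMatrix, hij]
    · simp [sumEquivOfInjective, distSqMatrix, hij,
        SimpleGraph.dist_eq_two_of_neighborSet_eq (hpend i) (hpend j) (hp.ne hij)]
      norm_num
  · simp [sumEquivOfInjective, distSqMatrix,
      SimpleGraph.dist_eq_dist_add_one_of_neighborSet_eq hG (hpend i) (v'.2 i)]
  · simp [sumEquivOfInjective, distSqMatrix, SimpleGraph.dist_comm (u := (v : V)),
      SimpleGraph.dist_eq_dist_add_one_of_neighborSet_eq hG (hpend j) (v.2 j)]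
  · simp [sumEquivOfInjective, distSqMatrix, SimpleGraph.dist_induce_eq_of_pendant_compl hG
      (S := {v | ∀ i, v ≠ p i}) (by simpa using fun i => ⟨w, hpend i⟩)]

theorem stmt1_general {n k : ℕ}
    (G : SimpleGraph (Fin n)) (hG : G.Connected)
    (w : Fin n) (p : Fin k → Fin n) (hp : Function.Injective p)
    (hpend : ∀ i, G.neighborSet (p i) = {w}) :
    iNeg (distSqMatrix G) =
      (k - 1) + iNeg (distSqMatrix (G.induce {v : Fin n | ∀ i : Fin k, v ≠ p i})) ∨
    iNeg (distSqMatrix G) =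
      k + iNeg (distSqMatrix (G.induce {v : Fin n | ∀ i : Fin k, v ≠ p i})) := by
  have hΔ := isHermitian_distSqMatrix G
  have hD := isHermitian_distSqMatrix (G.induce {v : Fin n | ∀ i : Fin k, v ≠ p i})
  have hblocks := distSqMatrix_submatrix_sumEquivOfInjective hG hp hpend
  have hM := hΔ.submatrix (sumEquivOfInjective hp)
  rw [hblocks] at hM
  have hupper := iNeg_fromBlocks_le hM hD
  have hlower := finrank_add_iNeg_le_iNeg_fromBlocks hM hD
    (isNegDefOn_sumZeroSubmodule four_pos)
    (fun c hc => by rw [vecMul_replicateRow_eq_sum_smul, mem_sumZeroSubmodule.mp hc, zero_smul])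
    (fun c hc => by rw [replicateCol_mulVec_eq_sum_smul, mem_sumZeroSubmodule.mp hc, zero_smul])
  have hdim := card_sub_one_le_finrank_sumZeroSubmodule (ι := Fin k)
  rw [← hblocks, hΔ.iNeg_submatrix_equiv] at hupper hlower
  rw [Fintype.card_fin] at hupper hdim
  omega

theorem stmt1 {n k : ℕ} (hk : 2 ≤ k)
    (G : SimpleGraph (Fin n)) (hG : G.Connected)
    (w : Fin n) (p : Fin k → Fin n) (hp : Function.Injective p)
    (hw : ∀ i, p i ≠ w)
    (hpend : ∀ i, G.neighborSet (p i) = {w})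
    (hG' : (G.induce {v : Fin n | ∀ i : Fin k, v ≠ p i}).Connected) :
    iNeg (distSqMatrix G) =
      (k - 1) + iNeg (distSqMatrix (G.induce {v : Fin n | ∀ i : Fin k, v ≠ p i})) ∨
    iNeg (distSqMatrix G) =
      k + iNeg (distSqMatrix (G.induce {v : Fin n | ∀ i : Fin k, v ≠ p i})) :=
  stmt1_general G hG w p hp hpend
end

section
/- Let G be a connected simple graph with distance squared matrix Δ, and let v be a vertex of degree 2 whose removal disconnects G, with neighbors u and w. Define x ∈ ℝ^n by x_u = x_w = 1, x_v = −2, and x_z = 0 for every other vertex z. Then Δx = 2·𝟙, where 𝟙 is the all-ones vector. -/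
open Matrix

section Aux

variable {n : ℕ} {G : SimpleGraph (Fin n)} {v : Fin n}

lemma lift_walk {a b : Fin n} (p : G.Walk a b) (hp : v ∉ p.support) :
    (G.induce {x : Fin n | x ≠ v}).Reachable
      ⟨a, fun h => hp (h ▸ p.start_mem_support)⟩
      ⟨b, fun h => hp (h ▸ p.end_mem_support)⟩ := by
  induction p with
  | nil => rfl
  | @cons a c b h q ih =>
    simp only [SimpleGraph.Walk.support_cons, List.mem_cons, not_or] at hp
    exact (SimpleGraph.Adj.reachable (by simpa using h : (G.induce {x : Fin n | x ≠ v}).Adj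
        ⟨a, fun hh => hp.1 hh.symm⟩ ⟨c, fun hh => hp.2 (hh ▸ q.start_mem_support)⟩)).trans
      (ih hp.2)

lemma decomp (hG : G.Connected) {i : Fin n} (hi : i ≠ v) :
    ∃ y, ∃ hy : y ≠ v, G.Adj v y ∧ G.dist i y + 1 ≤ G.dist i v ∧
      (G.induce {x : Fin n | x ≠ v}).Reachable ⟨i, hi⟩ ⟨y, hy⟩ := by
  have hne : G.dist i v ≠ 0 :=
    SimpleGraph.dist_ne_zero_iff_ne_and_reachable.mpr ⟨hi, hG i v⟩
  obtain ⟨p0, hp0⟩ := SimpleGraph.exists_walk_of_dist_ne_zero hne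
  have hlen : p0.bypass.length = G.dist i v :=
    le_antisymm (hp0 ▸ p0.length_bypass_le) (SimpleGraph.dist_le _)
  set p := p0.bypass with hp
  have hpath : p.IsPath := p0.bypass_isPath
  have hrnil : ¬ p.reverse.Nil := by
    rw [SimpleGraph.Walk.nil_iff_length_eq, SimpleGraph.Walk.length_reverse, hlen]
    omega
  obtain ⟨y, h, q, hq⟩ := SimpleGraph.Walk.not_nil_iff.mp hrnil
  have hrsupp : p.reverse.support = v :: q.support := by rw [hq]; rfl
  have hnodup : p.reverse.support.Nodup := (hpath.reverse).support_nodup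
  rw [hrsupp] at hnodup
  have hvq : v ∉ q.support := (List.nodup_cons.mp hnodup).1
  have hyv : y ≠ v := fun h' => hvq (h' ▸ q.start_mem_support)
  have hvqr : v ∉ q.reverse.support := by
    rwa [SimpleGraph.Walk.support_reverse, List.mem_reverse]
  have hlenq : q.length + 1 = G.dist i v := by
    have := congrArg SimpleGraph.Walk.length hq
    rw [SimpleGraph.Walk.length_reverse, hlen] at this
    simpa [SimpleGraph.Walk.length_cons] using this.symm
  refine ⟨y, hyv, h, ?_, ?_⟩
  · have := SimpleGraph.dist_le q.reverse
    rw [SimpleGraph.Walk.length_reverse] at this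
    omega
  · exact lift_walk q.reverse hvqr

lemma sideCalc (hG : G.Connected) {u w : Fin n}
    (hu : G.Adj v u) (hw : G.Adj v w)
    (hnbr : ∀ y, G.Adj v y → y = u ∨ y = w)
    (hnr : ¬ (G.induce {x : Fin n | x ≠ v}).Reachable ⟨u, hu.ne'⟩ ⟨w, hw.ne'⟩)
    {i : Fin n} (hi : i ≠ v)
    (hru : (G.induce {x : Fin n | x ≠ v}).Reachable ⟨i, hi⟩ ⟨u, hu.ne'⟩) :
    G.dist i v = G.dist i u + 1 ∧ G.dist i w = G.dist i v + 1 := by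
  have hdvu : G.dist v u = 1 := SimpleGraph.dist_eq_one_iff_adj.mpr hu
  have hdvw : G.dist v w = 1 := SimpleGraph.dist_eq_one_iff_adj.mpr hw
  obtain ⟨y, hy, hadj, hle, hreach⟩ := decomp hG hi
  have hyu : y = u := by
    rcases hnbr y hadj with h | h
    · exact h
    · subst h
      exact absurd (hru.symm.trans hreach) hnr
  rw [hyu] at hle
  have h1 : G.dist i v = G.dist i u + 1 := by
    have hduv : G.dist u v = 1 := by rw [SimpleGraph.dist_comm]; exact hdvu
    have htri : G.dist i v ≤ G.dist i u + G.dist u v := hG.dist_triangle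
    rw [hduv] at htri
    omega
  refine ⟨h1, ?_⟩
  have hiw : i ≠ w := by
    rintro rfl
    exact hnr (hru.symm)
  have hne : G.dist i w ≠ 0 :=
    SimpleGraph.dist_ne_zero_iff_ne_and_reachable.mpr ⟨hiw, hG i w⟩
  obtain ⟨p0, hp0⟩ := SimpleGraph.exists_walk_of_dist_ne_zero hne
  have hlen : p0.bypass.length = G.dist i w :=
    le_antisymm (hp0 ▸ p0.length_bypass_le) (SimpleGraph.dist_le _)
  set p := p0.bypass with hp
  have hvp : v ∈ p.support := by
    by_contra hvp
    exact hnr ((hru.symm.trans (lift_walk p hvp)))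
  have hsplit := p.take_spec hvp
  have hlens := congrArg SimpleGraph.Walk.length hsplit
  rw [SimpleGraph.Walk.length_append] at hlens
  have h2 : G.dist i v ≤ (p.takeUntil v hvp).length := SimpleGraph.dist_le _
  have h3 : 1 ≤ (p.dropUntil v hvp).length := by
    have := SimpleGraph.dist_le (p.dropUntil v hvp)
    rw [hdvw] at this
    omega
  have htri : G.dist i w ≤ G.dist i v + G.dist v w := hG.dist_triangle
  rw [hdvw] at htri
  omega

end Aux

theorem stmt2 {n : ℕ} (G : SimpleGraph (Fin n)) [DecidableRel G.Adj]
    (hG : G.Connected)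
    (v u w : Fin n) (huw : u ≠ w)
    (hu : G.Adj v u) (hw : G.Adj v w)
    (hdeg : G.degree v = 2)
    (hdisc : ¬ (G.induce {x : Fin n | x ≠ v}).Connected)
    (x : Fin n → ℝ)
    (hx : x = fun z => if z = u ∨ z = w then 1 else if z = v then -2 else 0) :
    (distSqMatrix G).mulVec x = fun _ => 2 := by
  have huv : u ≠ v := hu.ne'
  have hwv : w ≠ v := hw.ne'
  -- neighbors of v are exactly u and w
  have hnbr : ∀ y, G.Adj v y → y = u ∨ y = w := by
    have hsub : ({u, w} : Finset (Fin n)) ⊆ G.neighborFinset v := by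
      intro y hy
      rw [SimpleGraph.mem_neighborFinset]
      rcases Finset.mem_insert.mp hy with rfl | hy
      · exact hu
      · rw [Finset.mem_singleton] at hy; subst hy; exact hw
    have hcard : (G.neighborFinset v).card ≤ ({u, w} : Finset (Fin n)).card := by
      rw [Finset.card_insert_of_notMem (by simpa using huw), Finset.card_singleton]
      rw [← SimpleGraph.card_neighborFinset_eq_degree] at hdeg
      omega
    have := Finset.eq_of_subset_of_card_le hsub hcard
    intro y hy
    have : y ∈ ({u, w} : Finset (Fin n)) := this ▸ (SimpleGraph.mem_neighborFinset _ _ _).mpr hy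
    simpa using this
  -- u and w are not reachable in the induced graph
  have hnr : ¬ (G.induce {x : Fin n | x ≠ v}).Reachable ⟨u, huv⟩ ⟨w, hwv⟩ := by
    intro hr
    apply hdisc
    rw [SimpleGraph.connected_iff]
    refine ⟨fun a b => ?_, ⟨⟨u, huv⟩⟩⟩
    have key : ∀ c : {x : Fin n | x ≠ v},
        (G.induce {x : Fin n | x ≠ v}).Reachable c ⟨u, huv⟩ := by
      intro c
      obtain ⟨y, hy, hadj, _, hreach⟩ := decomp hG c.2
      rcases hnbr y hadj with rfl | rfl
      · exact hreach
      · exact hreach.trans hr.symm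
    exact (key a).trans (key b).symm
  -- rewrite x
  have hxs : x = Pi.single u (1:ℝ) + Pi.single w 1 + Pi.single v (-2) := by
    subst hx
    funext z
    by_cases hzu : z = u
    · subst hzu; simp [Pi.single_apply, huw, huv]
    · by_cases hzw : z = w
      · subst hzw; simp [Pi.single_apply, huw.symm, hwv, hzu]
      · by_cases hzv : z = v
        · subst hzv; simp [Pi.single_apply, huv.symm, hwv.symm, hzu, hzw]
        · simp [Pi.single_apply, hzu, hzw, hzv]
  rw [hxs]
  funext i
  simp only [mulVec_add, mulVec_single, Pi.add_apply]
  show (distSqMatrix G) i u * 1 + (distSqMatrix G) i w * 1 + (distSqMatrix G) i v * (-2) = 2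
  simp only [distSqMatrix, Matrix.of_apply]
  by_cases hiv : i = v
  · subst hiv
    rw [SimpleGraph.dist_eq_one_iff_adj.mpr hu, SimpleGraph.dist_eq_one_iff_adj.mpr hw,
      SimpleGraph.dist_self]
    norm_num
  · obtain ⟨y, hy, hadj, _, hreach⟩ := decomp hG hiv
    rcases hnbr y hadj with rfl | rfl
    · obtain ⟨h1, h2⟩ := sideCalc hG hu hw hnbr hnr hiv hreach
      rw [h2, h1]
      push_cast
      ring
    · obtain ⟨h1, h2⟩ := sideCalc hG hw hu (fun z hz => (hnbr z hz).symm)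
        (fun h => hnr h.symm) hiv hreach
      rw [h2, h1]
      push_cast
      ring
end

section
/- Let G be a connected simple graph on n vertices and let v_1,…,v_t be distinct vertices of G, each of degree 2 and each such that its removal disconnects G. For each i, letting u_i and w_i be the two neighbors of v_i, define x_i ∈ ℝ^n by (x_i)_{u_i} = (x_i)_{w_i} = 1, (x_i)_{v_i} = −2, and all other entries 0. Then the set {x_1,…,x_t} is linearly independent. -/
open Matrix

section AuxStmt3


lemma closed_walk' {V : Type*} {G : SimpleGraph V} {S : Set V}
    (hS : ∀ x ∈ S, ∀ y, G.Adj x y → y ∈ S) :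
    ∀ {s z : V}, s ∈ S → G.Walk s z → z ∈ S := by
  intro s z hs w
  induction w with
  | nil => exact hs
  | cons h q ih => exact ih (hS _ hs _ h)

lemma closed_univ' {V : Type*} {G : SimpleGraph V} (hG : G.Preconnected) {S : Set V}
    (hS : ∀ x ∈ S, ∀ y, G.Adj x y → y ∈ S) {s : V} (hs : s ∈ S) : ∀ z, z ∈ S := by
  intro z
  obtain ⟨q⟩ := hG s z
  exact closed_walk' hS hs q


end AuxStmt3

section CutLemma


lemma cl_walk_cut {V : Type*} {G : SimpleGraph V} {S : Set V}
    (hS : ∀ x ∈ S, ∀ y, G.Adj x y → y ∈ S) :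
    ∀ {s z : V}, s ∈ S → G.Walk s z → z ∈ S := by
  intro s z hs w
  induction w with
  | nil => exact hs
  | cons h q ih => exact ih (hS _ hs _ h)

lemma cut_lemma {V : Type*} [Fintype V] [DecidableEq V] {G : SimpleGraph V} [DecidableRel G.Adj]
    (hG : G.Connected) {p a b : V} (hpa : G.Adj p a) (hpb : G.Adj p b) (hab : a ≠ b)
    (hN : ∀ y, G.Adj p y → y = a ∨ y = b)
    (hdeg2 : ∀ z, G.degree z = 2)
    (hdisc : ¬ (G.induce {x : V | x ≠ p}).Connected) : False := by
  set H := G.induce {x : V | x ≠ p} with hH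
  have ha : a ∈ {x : V | x ≠ p} := (G.ne_of_adj hpa).symm
  have hb : b ∈ {x : V | x ≠ p} := (G.ne_of_adj hpb).symm
  by_cases hr : H.Reachable ⟨a, ha⟩ ⟨b, hb⟩
  · -- H is connected, contradiction
    have key : ∀ s z : V, (s = p ∨ ∃ hs : s ≠ p, H.Reachable ⟨a, ha⟩ ⟨s, hs⟩) →
        G.Walk s z → (z = p ∨ ∃ hz : z ≠ p, H.Reachable ⟨a, ha⟩ ⟨z, hz⟩) := by
      intro s z hs w
      induction w with
      | nil => exact hs
      | @cons s m z h q ih =>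
        apply ih
        rcases hs with hs | ⟨hs, hreach⟩
        · subst hs
          rcases hN m h with rfl | rfl
          · exact Or.inr ⟨ha, SimpleGraph.Reachable.refl _⟩
          · exact Or.inr ⟨hb, hr⟩
        · by_cases hm : m = p
          · exact Or.inl hm
          · refine Or.inr ⟨hm, hreach.trans (SimpleGraph.Adj.reachable ?_)⟩
            exact SimpleGraph.comap_adj.2 h
    apply hdisc
    have hne : Nonempty ↑{x : V | x ≠ p} := ⟨⟨a, ha⟩⟩
    refine SimpleGraph.Connected.mk ?_
    · rintro ⟨y, hy⟩ ⟨z, hz⟩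
      obtain ⟨q1⟩ := hG.preconnected a y
      obtain ⟨q2⟩ := hG.preconnected a z
      have h1 := key a y (Or.inr ⟨ha, SimpleGraph.Reachable.refl _⟩) q1
      have h2 := key a z (Or.inr ⟨ha, SimpleGraph.Reachable.refl _⟩) q2
      rcases h1 with h1 | ⟨hy', h1⟩
      · exact absurd h1 hy
      rcases h2 with h2 | ⟨hz', h2⟩
      · exact absurd h2 hz
      exact h1.symm.trans h2
  · -- parity argument
    classical
    set C : Finset V := Finset.univ.filter
      (fun y => ∃ hy : y ≠ p, H.Reachable ⟨a, ha⟩ ⟨y, hy⟩) with hC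
    have haC : a ∈ C := by
      simp only [hC, Finset.mem_filter, Finset.mem_univ, true_and]
      exact ⟨ha, SimpleGraph.Reachable.refl _⟩
    have hbC : b ∉ C := by
      simp only [hC, Finset.mem_filter, Finset.mem_univ, true_and]
      rintro ⟨hb', hreach⟩
      exact hr hreach
    have hpC : p ∉ C := by
      simp only [hC, Finset.mem_filter, Finset.mem_univ, true_and]
      rintro ⟨hp', _⟩
      exact hp' rfl
    have hCcl : ∀ x ∈ C, ∀ y, G.Adj x y → y ≠ p → y ∈ C := by
      intro x hx y hxy hy
      simp only [hC, Finset.mem_filter, Finset.mem_univ, true_and] at hx ⊢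
      obtain ⟨hx', hreach⟩ := hx
      exact ⟨hy, hreach.trans (SimpleGraph.Adj.reachable
        (SimpleGraph.comap_adj.2 hxy))⟩
    -- degree as sum
    have hdegsum : ∀ x : V, (G.degree x : ZMod 2) =
        ∑ y : V, (if G.Adj x y then (1 : ZMod 2) else 0) := by
      intro x
      rw [← SimpleGraph.card_neighborFinset_eq_degree]
      rw [SimpleGraph.neighborFinset_eq_filter, Finset.card_filter]
      push_cast
      rfl
    have htot : (0 : ZMod 2) = ∑ x ∈ C, (G.degree x : ZMod 2) := by
      have hz : ∀ x ∈ C, (G.degree x : ZMod 2) = 0 := by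
        intro x _
        rw [hdeg2 x]
        decide
      rw [Finset.sum_congr rfl hz, Finset.sum_const, smul_zero]
    have hsplit : ∀ x : V, ∑ y : V, (if G.Adj x y then (1 : ZMod 2) else 0) =
        ∑ y ∈ C, (if G.Adj x y then (1 : ZMod 2) else 0)
          + ∑ y ∈ Cᶜ, (if G.Adj x y then (1 : ZMod 2) else 0) :=
      fun x => (Finset.sum_add_sum_compl C _).symm
    have hS1 : ∑ x ∈ C, ∑ y ∈ C, (if G.Adj x y then (1 : ZMod 2) else 0) = 0 := by
      rw [← Finset.sum_product']
      refine Finset.sum_involution (fun q _ => q.swap) ?_ ?_ ?_ ?_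
      · intro q hq
        have : (if G.Adj q.swap.1 q.swap.2 then (1 : ZMod 2) else 0)
            = (if G.Adj q.1 q.2 then (1 : ZMod 2) else 0) := by
          simp only [Prod.fst_swap, Prod.snd_swap]
          congr 1
          simp [SimpleGraph.adj_comm]
        rw [this]
        split <;> decide
      · intro q hq hne
        intro hswap
        have : G.Adj q.1 q.2 := by by_contra hadj; simp [hadj] at hne
        have hne12 : q.1 ≠ q.2 := G.ne_of_adj this
        apply hne12
        have := congrArg Prod.fst hswap
        simpa using this.symm
      · intro q hq
        simp only [Finset.mem_product] at hq ⊢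
        exact ⟨hq.2, hq.1⟩
      · intro q hq; simp
    have hS2 : ∀ x ∈ C, ∑ y ∈ Cᶜ, (if G.Adj x y then (1 : ZMod 2) else 0)
        = (if x = a then 1 else 0) := by
      intro x hx
      rw [Finset.sum_eq_single_of_mem p (Finset.mem_compl.2 hpC)]
      · have : G.Adj x p ↔ x = a := by
          constructor
          · intro hadj
            rcases hN x hadj.symm with h | h
            · exact h
            · exact absurd (h ▸ hx) hbC
          · rintro rfl; exact hpa.symm
        simp [this]
      · intro y hy hyp
        have : ¬ G.Adj x y := by
          intro hadj
          exact (Finset.mem_compl.1 hy) (hCcl x hx y hadj hyp)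
        simp [this]
    have : (0 : ZMod 2) = 1 := by
      calc (0 : ZMod 2) = ∑ x ∈ C, (G.degree x : ZMod 2) := htot
        _ = ∑ x ∈ C, (∑ y ∈ C, (if G.Adj x y then (1 : ZMod 2) else 0)
              + ∑ y ∈ Cᶜ, (if G.Adj x y then (1 : ZMod 2) else 0)) := by
            refine Finset.sum_congr rfl fun x _ => by rw [hdegsum, hsplit]
        _ = ∑ x ∈ C, ∑ y ∈ C, (if G.Adj x y then (1 : ZMod 2) else 0)
              + ∑ x ∈ C, ∑ y ∈ Cᶜ, (if G.Adj x y then (1 : ZMod 2) else 0) :=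
            Finset.sum_add_distrib
        _ = 0 + ∑ x ∈ C, (if x = a then (1 : ZMod 2) else 0) := by
            rw [hS1]; congr 1; exact Finset.sum_congr rfl hS2
        _ = 1 := by rw [zero_add, Finset.sum_ite_eq' C a (fun _ => (1:ZMod 2))]
                    simp [haC]
    exact absurd this (by decide)

end CutLemma

theorem stmt3 {n t : ℕ} (G : SimpleGraph (Fin n)) [DecidableRel G.Adj]
    (hG : G.Connected)
    (v : Fin t → Fin n) (hv : Function.Injective v)
    (u w : Fin t → Fin n)
    (hdeg : ∀ i, G.degree (v i) = 2)
    (hnbr : ∀ i, G.Adj (v i) (u i) ∧ G.Adj (v i) (w i) ∧ u i ≠ w i)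
    (hdisc : ∀ i, ¬ (G.induce {x : Fin n | x ≠ v i}).Connected)
    (x : Fin t → Fin n → ℝ)
    (hx : ∀ i, x i = fun z =>
      if z = u i ∨ z = w i then 1 else if z = v i then -2 else 0) :
    LinearIndependent ℝ x := by
  classical
  rw [Fintype.linearIndependent_iff]
  intro c hsum
  by_contra hcon
  push_neg at hcon
  obtain ⟨j, hj⟩ := hcon
  -- neighborhoods
  have hNbhd : ∀ i, G.neighborFinset (v i) = {u i, w i} := by
    intro i
    refine (Finset.eq_of_subset_of_card_le ?_ ?_).symm
    · intro y hy
      rcases Finset.mem_insert.1 hy with rfl | hy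
      · exact (SimpleGraph.mem_neighborFinset G (v i) (u i)).2 (hnbr i).1
      · rw [Finset.mem_singleton] at hy
        subst hy
        exact (SimpleGraph.mem_neighborFinset G (v i) (w i)).2 (hnbr i).2.1
    · rw [SimpleGraph.card_neighborFinset_eq_degree, hdeg i, Finset.card_pair (hnbr i).2.2]
  have hAdjv : ∀ i y, G.Adj (v i) y ↔ (y = u i ∨ y = w i) := by
    intro i y
    rw [← SimpleGraph.mem_neighborFinset, hNbhd i]
    simp
  -- index neighbor sets
  set N : Fin t → Finset (Fin t) :=
    fun j => Finset.univ.filter (fun i => G.Adj (v i) (v j)) with hN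
  have hmemN : ∀ j i, i ∈ N j ↔ G.Adj (v i) (v j) := by
    intro j i; simp [hN]
  -- the key equations
  have hEq : ∀ j, ∑ i ∈ N j, c i = 2 * c j := by
    intro j
    have h0 := congrFun hsum (v j)
    simp only [Finset.sum_apply, Pi.smul_apply, smul_eq_mul, Pi.zero_apply] at h0
    have hterm : ∀ i, c i * x i (v j) =
        (if i ∈ N j then c i else 0) + (if i = j then -2 * c j else 0) := by
      intro i
      rw [hx i]
      by_cases h1 : v j = u i ∨ v j = w i
      · have hadj : G.Adj (v i) (v j) := (hAdjv i (v j)).2 h1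
        have hmem : i ∈ N j := (hmemN j i).2 hadj
        have hij : i ≠ j := by
          rintro rfl
          exact G.irrefl hadj
        simp [h1, hmem, hij]
      · have hmem : i ∉ N j := fun hm => h1 ((hAdjv i (v j)).1 ((hmemN j i).1 hm))
        by_cases hij : i = j
        · subst hij
          simp [h1, hmem, mul_comm]
        · have hvij : v j ≠ v i := fun h => hij (hv h).symm
          simp [h1, hmem, hij, hvij]
    rw [Finset.sum_congr rfl (fun i _ => hterm i), Finset.sum_add_distrib] at h0
    rw [Finset.sum_ite_mem, Finset.univ_inter, Finset.sum_ite_eq' Finset.univ j] at h0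
    simp only [Finset.mem_univ, if_true] at h0
    linarith
  have hcard : ∀ j, (N j).card ≤ 2 := by
    intro j
    calc (N j).card = ((N j).image v).card := (Finset.card_image_of_injective _ hv).symm
      _ ≤ (G.neighborFinset (v j)).card := by
          apply Finset.card_le_card
          intro y hy
          simp only [Finset.mem_image] at hy
          obtain ⟨i, hi, rfl⟩ := hy
          exact (SimpleGraph.mem_neighborFinset G (v j) (v i)).2 ((hmemN j i).1 hi).symm
      _ = 2 := by rw [SimpleGraph.card_neighborFinset_eq_degree]; exact hdeg j
  -- maximum
  obtain ⟨j₀, -, hj₀⟩ := Finset.exists_max_image Finset.univ (fun i => |c i|)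
    ⟨j, Finset.mem_univ j⟩
  set M := |c j₀| with hMdef
  have hM : 0 < M := lt_of_lt_of_le (abs_pos.2 hj) (hj₀ j (Finset.mem_univ j))
  set ε : ℝ := if 0 ≤ c j₀ then 1 else -1 with hε
  set d : Fin t → ℝ := fun i => ε * c i with hd
  have habs : ∀ i, |d i| = |c i| := by
    intro i
    rw [hd]
    by_cases h : 0 ≤ c j₀ <;> simp [hε, h, abs_mul]
  have hdj₀ : d j₀ = M := by
    rw [hd, hMdef]
    by_cases h : 0 ≤ c j₀
    · simp [hε, h, abs_of_nonneg h]
    · push_neg at h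
      simp [hε, not_le.2 h, abs_of_neg h]
  have hdle : ∀ i, d i ≤ M := fun i =>
    le_trans (le_abs_self _) (le_trans (le_of_eq (habs i)) (hj₀ i (Finset.mem_univ i)))
  have hdEq : ∀ j, ∑ i ∈ N j, d i = 2 * d j := by
    intro j
    simp only [hd]
    rw [← Finset.mul_sum, hEq j]
    ring
  set A : Finset (Fin t) := Finset.univ.filter (fun i => d i = M) with hA
  have hj₀A : j₀ ∈ A := by simp [hA, hdj₀]
  have hAkey : ∀ j ∈ A, (N j).card = 2 ∧ N j ⊆ A := by
    intro j hjA
    have hdj : d j = M := by simpa [hA] using hjA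
    have hsum2 : ∑ i ∈ N j, d i = 2 * M := by rw [hdEq j, hdj]
    have hnn : ∀ i ∈ N j, 0 ≤ M - d i := fun i _ => sub_nonneg.2 (hdle i)
    have h1 : ∑ i ∈ N j, (M - d i) = ((N j).card : ℝ) * M - 2 * M := by
      rw [Finset.sum_sub_distrib, hsum2, Finset.sum_const, nsmul_eq_mul]
    have h2 : 0 ≤ ∑ i ∈ N j, (M - d i) := Finset.sum_nonneg hnn
    have h3 : ((N j).card : ℝ) ≤ 2 := by exact_mod_cast hcard j
    have h4 : ∑ i ∈ N j, (M - d i) = 0 := by nlinarith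
    constructor
    · have h5 : ((N j).card : ℝ) * M = 2 * M := by linarith [h1 ▸ h4]
      have h6 : ((N j).card : ℝ) = 2 := mul_right_cancel₀ (ne_of_gt hM) h5
      exact_mod_cast h6
    · intro i hi
      have := (Finset.sum_eq_zero_iff_of_nonneg hnn).1 h4 i hi
      simp only [hA, Finset.mem_filter, Finset.mem_univ, true_and]
      linarith
  -- the vertex set B
  set B : Set (Fin n) := {z | ∃ i ∈ A, v i = z} with hB
  have hBcl : ∀ z ∈ B, ∀ y, G.Adj z y → y ∈ B := by
    rintro z ⟨i, hiA, rfl⟩ y hzy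
    obtain ⟨hc2, hsub⟩ := hAkey i hiA
    have himg : (N i).image v = {u i, w i} := by
      apply Finset.eq_of_subset_of_card_le
      · intro y' hy'
        simp only [Finset.mem_image] at hy'
        obtain ⟨k, hk, rfl⟩ := hy'
        have hadj : G.Adj (v i) (v k) := ((hmemN i k).1 hk).symm
        rcases (hAdjv i (v k)).1 hadj with h | h <;> simp [h]
      · rw [Finset.card_pair (hnbr i).2.2, Finset.card_image_of_injective _ hv, hc2]
    have hy2 : y ∈ (N i).image v := by
      rw [himg]
      rcases (hAdjv i y).1 hzy with rfl | rfl <;> simp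
    simp only [Finset.mem_image] at hy2
    obtain ⟨k, hk, rfl⟩ := hy2
    exact ⟨k, hsub hk, rfl⟩
  have hBuniv : ∀ z, z ∈ B := closed_univ' hG.preconnected hBcl ⟨j₀, hj₀A, rfl⟩
  have hdeg2 : ∀ z, G.degree z = 2 := by
    intro z
    obtain ⟨i, -, rfl⟩ := hBuniv z
    exact hdeg i
  exact cut_lemma hG (hnbr j₀).1 (hnbr j₀).2.1 (hnbr j₀).2.2
    (fun y hy => (hAdjv j₀ y).1 hy) hdeg2 (hdisc j₀)
end

section
/- Let G be a connected simple graph with distance squared matrix Δ. If G has t ≥ 2 distinct vertices, each of degree 2 and each such that its removal disconnects G, then i_0(Δ) ≥ t − 1. -/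
open Matrix

/-- A walk avoiding `v` gives reachability in the graph induced on `{z | z ≠ v}`. -/
lemma reach_induce_of_walk {V : Type*} {G : SimpleGraph V} {v : V} :
    ∀ {x y : V} (w : G.Walk x y), v ∉ w.support →
      ∀ (hx : x ≠ v) (hy : y ≠ v),
        (G.induce {z | z ≠ v}).Reachable ⟨x, hx⟩ ⟨y, hy⟩ := by
  intro x y w
  induction w with
  | nil => intro _ hx hy; rfl
  | cons h w ih =>
    rename_i p q r
    intro hsup hx hy
    rw [SimpleGraph.Walk.support_cons] at hsup
    rw [List.mem_cons] at hsup; push_neg at hsup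
    have hq : q ≠ v := fun hqv => hsup.2 (hqv ▸ w.start_mem_support)
    refine SimpleGraph.Reachable.trans ?_ (ih hsup.2 hq hy)
    exact SimpleGraph.Adj.reachable (by simp [h])

section key
variable {n : ℕ} {G : SimpleGraph (Fin n)} [DecidableRel G.Adj] {v0 : Fin n}

/-- Step: asymmetric version. -/
lemma side_dist (hG : G.Connected) (hnb : G.neighborFinset v0 = {c, d})
    (hc : G.Adj v0 c) (hd : G.Adj v0 d)
    (hncd : ¬ (G.induce {z | z ≠ v0}).Reachable ⟨c, hc.ne'⟩ ⟨d, hd.ne'⟩)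
    {x : Fin n} (hx : x ≠ v0)
    (hxc : (G.induce {z | z ≠ v0}).Reachable ⟨x, hx⟩ ⟨c, hc.ne'⟩) :
    G.dist x v0 = G.dist x c + 1 ∧ G.dist x d = G.dist x v0 + 1 := by
  have hdd1 : G.dist v0 d = 1 := by rwa [SimpleGraph.dist_eq_one_iff_adj]
  have hdc1 : G.dist c v0 = 1 := by
    rw [SimpleGraph.dist_eq_one_iff_adj]; exact hc.symm
  -- (i) dist x d = dist x v0 + 1
  have hi : G.dist x d = G.dist x v0 + 1 := by
    have hle : G.dist x d ≤ G.dist x v0 + 1 := by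
      calc G.dist x d ≤ G.dist x v0 + G.dist v0 d := hG.dist_triangle
        _ = G.dist x v0 + 1 := by rw [hdd1]
    have hge : G.dist x v0 + 1 ≤ G.dist x d := by
      obtain ⟨p, hp⟩ := hG.exists_walk_length_eq_dist x d
      by_cases hvp : v0 ∈ p.support
      · have h1 : G.dist x v0 ≤ (p.takeUntil v0 hvp).length := SimpleGraph.dist_le _
        have h2 : G.dist v0 d ≤ (p.dropUntil v0 hvp).length := SimpleGraph.dist_le _
        have h3 : (p.takeUntil v0 hvp).length + (p.dropUntil v0 hvp).length = p.length := by
          rw [← SimpleGraph.Walk.length_append, SimpleGraph.Walk.take_spec]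
        omega
      · exact absurd (hxc.symm.trans (reach_induce_of_walk p hvp hx hd.ne'))  hncd
    omega
  refine ⟨?_, hi⟩
  -- (ii) dist x v0 = dist x c + 1
  have hle : G.dist x v0 ≤ G.dist x c + 1 := by
    calc G.dist x v0 ≤ G.dist x c + G.dist c v0 := hG.dist_triangle
      _ = G.dist x c + 1 := by rw [hdc1]
  have hge : G.dist x c + 1 ≤ G.dist x v0 := by
    obtain ⟨p, hp⟩ := hG.exists_walk_length_eq_dist v0 x
    rw [SimpleGraph.dist_comm] at hp
    cases p with
    | nil => exact absurd rfl (Ne.symm hx)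
    | cons h w =>
      rename_i m
      have hm : m ∈ G.neighborFinset v0 := by
        rw [SimpleGraph.mem_neighborFinset]; exact h
      rw [hnb, Finset.mem_insert, Finset.mem_singleton] at hm
      have hwl : G.dist x m ≤ w.length := by
        have := SimpleGraph.dist_le w.reverse
        simpa [SimpleGraph.dist_comm] using this
      rw [SimpleGraph.Walk.length_cons] at hp
      rcases hm with rfl | rfl
      · omega
      · omega
  omega

lemma key (hG : G.Connected) (hdeg : G.degree v0 = 2)
    (hdisc : ¬ (G.induce {x : Fin n | x ≠ v0}).Connected) :
    ∃ a b : Fin n, G.Adj v0 a ∧ G.Adj v0 b ∧ a ≠ b ∧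
      ∀ x, x ≠ v0 →
        G.dist x a + G.dist x b = 2 * G.dist x v0 ∧
        (G.dist x a)^2 + (G.dist x b)^2 = 2*(G.dist x v0)^2 + 2 := by
  rw [← SimpleGraph.card_neighborFinset_eq_degree] at hdeg
  obtain ⟨a, b, hab, hnb⟩ := Finset.card_eq_two.mp hdeg
  have ha : G.Adj v0 a := by
    rw [← SimpleGraph.mem_neighborFinset, hnb]; simp
  have hb : G.Adj v0 b := by
    rw [← SimpleGraph.mem_neighborFinset, hnb]; simp
  set I := G.induce {z | z ≠ v0} with hI
  -- every vertex ≠ v0 reaches a or b in I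
  have hreach : ∀ (x : Fin n) (hx : x ≠ v0),
      I.Reachable ⟨x, hx⟩ ⟨a, ha.ne'⟩ ∨ I.Reachable ⟨x, hx⟩ ⟨b, hb.ne'⟩ := by
    intro x hx
    obtain ⟨w⟩ := hG.preconnected v0 x
    have hp := w.toPath.2
    set p := (w.toPath : G.Walk v0 x) with hpdef
    cases hq : p with
    | nil => exact absurd rfl (Ne.symm hx)
    | cons h w' =>
      rename_i m
      rw [hq] at hp
      have hv0 : v0 ∉ w'.support := by
        have := hp.support_nodup
        rw [SimpleGraph.Walk.support_cons] at this
        exact (List.nodup_cons.mp this).1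
      have hm : m ∈ G.neighborFinset v0 := by
        rw [SimpleGraph.mem_neighborFinset]; exact h
      rw [hnb, Finset.mem_insert, Finset.mem_singleton] at hm
      have hv0r : v0 ∉ w'.reverse.support := by simpa using hv0
      have hmn : m ≠ v0 := h.ne'
      have hr := reach_induce_of_walk w'.reverse hv0r hx hmn
      rcases hm with rfl | rfl
      · exact Or.inl hr
      · exact Or.inr hr
  -- a and b are not reachable in I
  have hnab : ¬ I.Reachable ⟨a, ha.ne'⟩ ⟨b, hb.ne'⟩ := by
    intro hr
    apply hdisc
    rw [SimpleGraph.connected_iff]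
    refine ⟨?_, ⟨⟨a, ha.ne'⟩⟩⟩
    · rintro ⟨x, hx⟩ ⟨y, hy⟩
      rcases hreach x hx with h1 | h1 <;> rcases hreach y hy with h2 | h2
      · exact h1.trans h2.symm
      · exact (h1.trans hr).trans h2.symm
      · exact (h1.trans hr.symm).trans h2.symm
      · exact h1.trans h2.symm
  refine ⟨a, b, ha, hb, hab, ?_⟩
  intro x hx
  rcases hreach x hx with hs | hs
  · obtain ⟨h1, h2⟩ := side_dist hG hnb ha hb hnab hx hs
    constructor <;> nlinarith [h1, h2]
  · have hnb' : G.neighborFinset v0 = {b, a} := by rw [hnb, Finset.pair_comm]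
    have hnba : ¬ I.Reachable ⟨b, hb.ne'⟩ ⟨a, ha.ne'⟩ := fun h => hnab h.symm
    obtain ⟨h1, h2⟩ := side_dist hG hnb' hb ha hnba hx hs
    constructor <;> nlinarith [h1, h2]

end key

theorem stmt4 {n t : ℕ} (ht : 2 ≤ t)
    (G : SimpleGraph (Fin n)) [DecidableRel G.Adj]
    (hG : G.Connected)
    (v : Fin t → Fin n) (hv : Function.Injective v)
    (hdeg : ∀ i, G.degree (v i) = 2)
    (hdisc : ∀ i, ¬ (G.induce {x : Fin n | x ≠ v i}).Connected) :
    t - 1 ≤ iZero (distSqMatrix G) := by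
  classical
  have htpos : 0 < t := by omega
  choose a b ha hb hab hdist using fun i => key hG (hdeg i) (hdisc i)
  set Δ := distSqMatrix G with hΔ
  have hentry : ∀ x y, Δ x y = ((G.dist x y : ℝ))^2 := fun x y => rfl
  have hherm : Δ.IsHermitian := by
    ext x y
    simp only [Matrix.conjTranspose_apply, hentry, star_trivial, SimpleGraph.dist_comm]
  -- the vectors u i with Δ *ᵥ u i = const 2
  let u : Fin t → (Fin n → ℝ) := fun i =>
    Pi.single (a i) 1 + Pi.single (b i) 1 - Pi.single (v i) (2:ℝ)
  have hadist : ∀ i, G.dist (v i) (a i) = 1 := fun i =>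
    SimpleGraph.dist_eq_one_iff_adj.mpr (ha i)
  have hbdist : ∀ i, G.dist (v i) (b i) = 1 := fun i =>
    SimpleGraph.dist_eq_one_iff_adj.mpr (hb i)
  have hmulu : ∀ i, Δ *ᵥ u i = fun _ => (2:ℝ) := by
    intro i
    funext x
    have : (Δ *ᵥ u i) x = Δ x (a i) + Δ x (b i) - 2 * Δ x (v i) := by
      simp [u, Matrix.mulVec_add, Matrix.mulVec_sub, Matrix.mulVec_single]
      ring
    rw [this, hentry, hentry, hentry]
    by_cases hx : x = v i
    · subst hx
      rw [hadist i, hbdist i, SimpleGraph.dist_self]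
      norm_num
    · have h2 := (hdist i x hx).2
      have : ((G.dist x (a i) : ℝ))^2 + ((G.dist x (b i)))^2
          = 2*((G.dist x (v i) : ℝ))^2 + 2 := by exact_mod_cast h2
      linarith
  -- the dual functionals
  let dv : Fin t → (Fin n → ℝ) := fun j x => (G.dist x (v j) : ℝ)
  have hF : ∀ j i, dv j ⬝ᵥ u i = if i = j then 2 else 0 := by
    intro j i
    have hcalc : dv j ⬝ᵥ u i
        = (G.dist (a i) (v j) : ℝ) + (G.dist (b i) (v j)) - 2 * (G.dist (v i) (v j)) := by
      simp [u, dotProduct_add, dotProduct_sub, dotProduct_single, dv]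
      ring
    rw [hcalc]
    by_cases hij : i = j
    · subst hij
      rw [SimpleGraph.dist_comm (u := a i) (v := v i), SimpleGraph.dist_comm (u := b i) (v := v i),
        hadist i, hbdist i, SimpleGraph.dist_self]
      norm_num
    · have hvij : v j ≠ v i := fun h => hij (hv h).symm
      have h1 := (hdist i (v j) hvij).1
      rw [SimpleGraph.dist_comm (u := a i) (v := v j), SimpleGraph.dist_comm (u := b i) (v := v j),
        SimpleGraph.dist_comm (u := v i) (v := v j)]
      have : ((G.dist (v j) (a i) : ℝ)) + ((G.dist (v j) (b i)))
          = 2 * ((G.dist (v j) (v i) : ℝ)) := by exact_mod_cast h1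
      rw [if_neg hij]
      linarith
  -- kernel membership
  let i0 : Fin t := ⟨0, htpos⟩
  have hker : ∀ i : Fin t, u i - u i0 ∈ LinearMap.ker Δ.mulVecLin := by
    intro i
    rw [LinearMap.mem_ker, Matrix.mulVecLin_apply, Matrix.mulVec_sub, hmulu i, hmulu i0]
    exact sub_self _
  -- linear independence of the differences
  have hli : LinearIndependent ℝ (fun i : {i : Fin t // i ≠ i0} =>
      (⟨u i.1 - u i0, hker i.1⟩ : LinearMap.ker Δ.mulVecLin)) := by
    apply LinearIndependent.of_comp (LinearMap.ker Δ.mulVecLin).subtype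
    rw [Fintype.linearIndependent_iff]
    intro g hg j
    have hdot := congrArg (fun z => dv j.1 ⬝ᵥ z) hg
    have hsum : dv j.1 ⬝ᵥ (∑ i : {i : Fin t // i ≠ i0},
        g i • ((LinearMap.ker Δ.mulVecLin).subtype ∘ fun i : {i : Fin t // i ≠ i0} =>
          (⟨u i.1 - u i0, hker i.1⟩ : LinearMap.ker Δ.mulVecLin)) i)
        = ∑ i : {i : Fin t // i ≠ i0}, g i * (dv j.1 ⬝ᵥ (u i.1 - u i0)) := by
      simp [dotProduct, Finset.mul_sum, mul_comm, mul_assoc, mul_left_comm]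
      rw [Finset.sum_comm]
    rw [hsum] at hdot
    have heval : ∀ i : {i : Fin t // i ≠ i0},
        dv j.1 ⬝ᵥ (u i.1 - u i0) = if i = j then 2 else 0 := by
      intro i
      rw [dotProduct_sub, hF j.1 i.1, hF j.1 i0, if_neg (fun h : i0 = j.1 => j.2 h.symm)]
      by_cases h : i = j
      · subst h; rw [if_pos rfl, if_pos rfl]; ring
      · rw [if_neg h, if_neg (fun hh : i.1 = j.1 => h (Subtype.ext hh))]; ring
    rw [Finset.sum_congr rfl (fun i _ => by rw [heval i])] at hdot
    simp only [mul_ite, mul_zero, Finset.sum_ite_eq' Finset.univ, Finset.mem_univ,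
      if_true] at hdot
    simp at hdot
    linarith [hdot]
  -- dimension counting
  have hcard : Fintype.card {i : Fin t // i ≠ i0} = t - 1 := by
    have h1 := Fintype.card_subtype_compl (fun i : Fin t => i = i0)
    rw [Fintype.card_subtype_eq, Fintype.card_fin] at h1
    exact h1
  have hdim : t - 1 ≤ Module.finrank ℝ (LinearMap.ker Δ.mulVecLin) := by
    rw [← hcard]
    exact hli.fintype_card_le_finrank
  have hrn : Δ.rank + Module.finrank ℝ (LinearMap.ker Δ.mulVecLin) = n := by
    have h := LinearMap.finrank_range_add_finrank_ker Δ.mulVecLin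
    rw [Module.finrank_pi, Fintype.card_fin] at h
    exact h
  -- iZero in terms of rank
  have hzero : iZero Δ = n - Δ.rank := by
    simp only [iZero]
    rw [dif_pos hherm]
    have hsplit := Finset.card_filter_add_card_filter_not
      (s := (Finset.univ : Finset (Fin n))) (p := fun i => hherm.eigenvalues i = 0)
    rw [Finset.card_univ, Fintype.card_fin] at hsplit
    have hrank := hherm.rank_eq_card_non_zero_eigs
    rw [Fintype.card_subtype] at hrank
    simp only [ne_eq] at hrank
    omega
  omega
end

section
/- Let n ≥ 3 be odd and let Δ be the distance squared matrix of the cycle graph C_n. For each integer j with 1 ≤ j ≤ n, let v_j ∈ ℂ^n be the vector with entries (v_j)_k = ω^{jk} for k = 0,…,n−1, where ω = exp(2πi/n). Then Δ v_j = λ_j v_j, where λ_j = 2·(−1)^j · Σ_{i=1}^{(n−1)/2} i² · cos( (n − 2i)πj / n ). In particular the eigenvalues of Δ are exactly λ_1,…,λ_n. -/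
open Matrix

/-- the graph distance between vertices `i` and `j` of the cycle `C_n`:
`min (|i-j|, n - |i-j|)`. -/
def cycDist (n : ℕ) (i j : Fin n) : ℕ :=
  min (((i : ℤ) - (j : ℤ)).natAbs) (n - ((i : ℤ) - (j : ℤ)).natAbs)

/-- the distance squared matrix of the cycle `C_n` (as a real matrix) -/
noncomputable def cycleDistSq (n : ℕ) : Matrix (Fin n) (Fin n) ℝ :=
  Matrix.of fun i j => ((cycDist n i j : ℝ)) ^ 2

/-- the distance squared matrix of the cycle `C_n` (as a complex matrix) -/
noncomputable def cycleDistSqC (n : ℕ) : Matrix (Fin n) (Fin n) ℂ :=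
  Matrix.of fun i j => ((cycDist n i j : ℂ)) ^ 2


section Stmt7Aux
open Real

private lemma aux_pow_mod_eq {z : ℂ} {n : ℕ} (h : z ^ n = 1) (a : ℕ) :
    z ^ a = z ^ (a % n) := by
  conv_lhs => rw [← Nat.mod_add_div a n, pow_add, pow_mul, h, one_pow, mul_one]

private lemma aux_pow_congr_mod {z : ℂ} {n : ℕ} (h : z ^ n = 1) {a b : ℕ}
    (hab : a % n = b % n) : z ^ a = z ^ b := by
  rw [aux_pow_mod_eq h a, aux_pow_mod_eq h b, hab]

private lemma aux_omega_pow (n : ℕ) (a : ℕ) :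
    Complex.exp (2 * (π : ℂ) * Complex.I / n) ^ a
      = Complex.exp ((a : ℂ) * (2 * (π : ℂ) * Complex.I / n)) := by
  rw [Complex.exp_nat_mul]

private lemma aux_omega_pow_n (n : ℕ) (hn : n ≠ 0) :
    Complex.exp (2 * (π : ℂ) * Complex.I / n) ^ n = 1 := by
  rw [aux_omega_pow]
  have hn' : (n : ℂ) ≠ 0 := Nat.cast_ne_zero.mpr hn
  have : (n : ℂ) * (2 * (π : ℂ) * Complex.I / n) = 2 * π * Complex.I := by
    field_simp
  rw [this, Complex.exp_two_pi_mul_I]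

private lemma aux_exp_add_exp_neg (θ : ℝ) :
    Complex.exp ((θ : ℂ) * Complex.I) + Complex.exp (((-θ : ℝ) : ℂ) * Complex.I)
      = 2 * (Real.cos θ : ℂ) := by
  rw [Complex.ofReal_neg, Complex.exp_mul_I, Complex.exp_mul_I, Complex.cos_neg,
    Complex.sin_neg, Complex.ofReal_cos]
  ring

private lemma aux_pair_eq (n : ℕ) (hn : n ≠ 0) (j i : ℕ) (hi : i ≤ n) :
    Complex.exp (2 * (π : ℂ) * Complex.I / n) ^ (j * i)
      + Complex.exp (2 * (π : ℂ) * Complex.I / n) ^ (j * (n - i))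
      = 2 * (Real.cos (2 * π * j * i / n) : ℂ) := by
  set ω := Complex.exp (2 * (π : ℂ) * Complex.I / n) with hω
  have hn' : (n : ℂ) ≠ 0 := Nat.cast_ne_zero.mpr hn
  have h1 : ω ^ (j * i) = Complex.exp (((2 * π * j * i / n : ℝ) : ℂ) * Complex.I) := by
    rw [aux_omega_pow]; push_cast; congr 1; field_simp
  have h2 : ω ^ (j * (n - i)) = Complex.exp (((-(2 * π * j * i / n) : ℝ) : ℂ) * Complex.I) := by
    rw [aux_omega_pow]
    have e1 : ((j * (n - i) : ℕ) : ℂ) = (j : ℂ) * n - j * i := by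
      push_cast [Nat.cast_sub hi]; ring
    rw [e1]
    have e2 : ((j : ℂ) * n - j * i) * (2 * (π : ℂ) * Complex.I / n)
        = (j : ℕ) * (2 * π * Complex.I) + ((-(2 * π * j * i / n) : ℝ) : ℂ) * Complex.I := by
      push_cast; field_simp; ring
    rw [e2, Complex.exp_add, Complex.exp_nat_mul, Complex.exp_two_pi_mul_I, one_pow, one_mul]
  rw [h1, h2, aux_exp_add_exp_neg]

private lemma aux_cycDist_shift {n : ℕ} [NeZero n] (k d : Fin n) :
    cycDist n k (k + d) = min d.val (n - d.val) := by
  unfold cycDist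
  have hk := k.isLt; have hd := d.isLt
  have hval : ((k + d : Fin n) : ℕ) = (k.val + d.val) % n := Fin.val_add k d
  rcases lt_or_ge (k.val + d.val) n with h | h
  · rw [hval, Nat.mod_eq_of_lt h]
    have : ((k : ℤ) - ((k.val + d.val : ℕ) : ℤ)).natAbs = d.val := by
      push_cast; omega
    rw [this]
  · have h2 : (k.val + d.val) % n = k.val + d.val - n := by
      rw [Nat.mod_eq_sub_mod h, Nat.mod_eq_of_lt (by omega)]
    rw [hval, h2]
    have : ((k : ℤ) - ((k.val + d.val - n : ℕ) : ℤ)).natAbs = n - d.val := by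
      push_cast [Nat.cast_sub (le_of_lt (by omega : k.val + d.val - n < n)), *]
      omega
    rw [this]
    omega

private lemma aux_key_sum (n : ℕ) (hn : 3 ≤ n) (hodd : Odd n) (j : ℕ) :
    ∑ d : Fin n, ((min d.val (n - d.val) : ℕ) : ℂ) ^ 2
        * Complex.exp (2 * (π : ℂ) * Complex.I / n) ^ (j * d.val)
      = ((2 * (-1 : ℝ) ^ j * ∑ i ∈ Finset.Icc 1 ((n - 1) / 2),
          (i : ℝ) ^ 2 * Real.cos (((n : ℝ) - 2 * i) * π * j / n) : ℝ) : ℂ) := by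
  obtain ⟨m, hm⟩ := hodd
  have hn0 : n ≠ 0 := by omega
  have hnR : (n : ℝ) ≠ 0 := Nat.cast_ne_zero.mpr hn0
  have hm2 : (n - 1) / 2 = m := by omega
  set ω := Complex.exp (2 * (π : ℂ) * Complex.I / n) with hω
  set f : ℕ → ℂ := fun d => ((min d (n - d) : ℕ) : ℂ) ^ 2 * ω ^ (j * d) with hf
  have h11 : (-1 : ℝ) ^ j * (-1) ^ j = 1 := by
    rw [← pow_add]; exact Even.neg_one_pow ⟨j, rfl⟩
  have hRHS : 2 * (-1 : ℝ) ^ j * ∑ i ∈ Finset.Icc 1 ((n - 1) / 2),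
        (i : ℝ) ^ 2 * Real.cos (((n : ℝ) - 2 * i) * π * j / n)
      = ∑ i ∈ Finset.Icc 1 m, (i : ℝ) ^ 2 * (2 * Real.cos (2 * π * j * i / n)) := by
    rw [hm2, Finset.mul_sum]
    refine Finset.sum_congr rfl fun i hi => ?_
    have e : ((n : ℝ) - 2 * i) * π * j / n = (j : ℕ) * π - 2 * π * j * i / n := by
      field_simp
    rw [e, Real.cos_nat_mul_pi_sub]
    linear_combination (2 * (i : ℝ) ^ 2 * Real.cos (2 * π * j * i / n)) * h11
  have hL1 : ∑ d : Fin n, ((min d.val (n - d.val) : ℕ) : ℂ) ^ 2 * ω ^ (j * d.val)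
      = ∑ d ∈ Finset.range n, f d := Fin.sum_univ_eq_sum_range f n
  have hins : Finset.range n = insert 0 (Finset.Ioc 0 (2 * m)) := by
    ext a; simp [Finset.mem_range, Finset.mem_Ioc]; omega
  have hL2 : ∑ d ∈ Finset.range n, f d = ∑ d ∈ Finset.Ioc 0 (2 * m), f d := by
    rw [hins, Finset.sum_insert (by simp)]
    have : f 0 = 0 := by simp [hf]
    rw [this, zero_add]
  have hsplit : ∑ d ∈ Finset.Ioc 0 m, f d + ∑ d ∈ Finset.Ioc m (2 * m), f d
      = ∑ d ∈ Finset.Ioc 0 (2 * m), f d :=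
    Finset.sum_Ioc_consecutive f (Nat.zero_le m) (by omega)
  have hre : ∑ d ∈ Finset.Ioc m (2 * m), f d = ∑ i ∈ Finset.Ioc 0 m, f (n - i) := by
    refine Finset.sum_nbij' (fun d => n - d) (fun i => n - i) ?_ ?_ ?_ ?_ ?_
    · intro a ha; simp only [Finset.mem_Ioc] at *; omega
    · intro a ha; simp only [Finset.mem_Ioc] at *; omega
    · intro a ha; simp only [Finset.mem_Ioc] at ha; show n - (n - a) = a; omega
    · intro a ha; simp only [Finset.mem_Ioc] at ha; show n - (n - a) = a; omega
    · intro a ha; simp only [Finset.mem_Ioc] at ha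
      show f a = f (n - (n - a)); congr 1; omega
  rw [hL1, hL2, ← hsplit, hre, ← Finset.sum_add_distrib, hRHS]
  push_cast
  have hIcc : Finset.Ioc 0 m = Finset.Icc 1 m := rfl
  rw [hIcc]
  refine Finset.sum_congr rfl fun i hi => ?_
  simp only [Finset.mem_Icc] at hi
  have hi1 : min i (n - i) = i := by omega
  have hi2 : min (n - i) (n - (n - i)) = i := by omega
  rw [hf]
  simp only [hi1, hi2]
  rw [mul_comm ((i:ℂ)^2) _, ← mul_comm ((i:ℂ)^2), ← mul_add, aux_pair_eq n hn0 j i (by omega)]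
  push_cast
  ring

private lemma aux_part1 {n : ℕ} (hn : 3 ≤ n) (hodd : Odd n) (j : ℕ) :
    (cycleDistSqC n).mulVec
        (fun k : Fin n => Complex.exp (2 * (π : ℂ) * Complex.I / n) ^ (j * (k : ℕ)))
      = ((2 * (-1 : ℝ) ^ j * ∑ i ∈ Finset.Icc 1 ((n - 1) / 2),
          (i : ℝ) ^ 2 * Real.cos (((n : ℝ) - 2 * i) * π * j / n) : ℝ) : ℂ)
        • (fun k : Fin n => Complex.exp (2 * (π : ℂ) * Complex.I / n) ^ (j * (k : ℕ))) := by
  have hn0 : n ≠ 0 := by omega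
  haveI : NeZero n := ⟨hn0⟩
  set ω := Complex.exp (2 * (π : ℂ) * Complex.I / n) with hω
  have hωn : ω ^ n = 1 := aux_omega_pow_n n hn0
  funext k
  show ∑ m : Fin n, cycleDistSqC n k m * ω ^ (j * (m : ℕ)) = _
  rw [← Equiv.sum_comp (Equiv.addLeft k) (fun m : Fin n => cycleDistSqC n k m * ω ^ (j * (m : ℕ)))]
  have hterm : ∀ d : Fin n,
      cycleDistSqC n k (Equiv.addLeft k d) * ω ^ (j * ((Equiv.addLeft k d : Fin n) : ℕ))
        = ω ^ (j * (k : ℕ)) * (((min d.val (n - d.val) : ℕ) : ℂ) ^ 2 * ω ^ (j * d.val)) := by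
    intro d
    have hadd : (Equiv.addLeft k d : Fin n) = k + d := rfl
    have hsplit : ω ^ (j * ((k + d : Fin n) : ℕ)) = ω ^ (j * (k : ℕ)) * ω ^ (j * (d : ℕ)) := by
      rw [← pow_add]
      refine aux_pow_congr_mod hωn ?_
      have h1 := Nat.ModEq.mul_left j (Nat.mod_modEq ((k : ℕ) + (d : ℕ)) n)
      rw [mul_add] at h1
      rw [Fin.val_add]
      exact h1
    rw [hadd, hsplit, cycleDistSqC]
    simp only [Matrix.of_apply, aux_cycDist_shift k d]
    ring
  rw [Finset.sum_congr rfl (fun d _ => hterm d), ← Finset.mul_sum, aux_key_sum n hn hodd j]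
  simp only [Pi.smul_apply, smul_eq_mul]
  ring

end Stmt7Aux

open Real in
/-- eigenvalues of the distance squared matrix of an odd cycle. -/
theorem stmt7 {n : ℕ} (hn : 3 ≤ n) (hodd : Odd n)
    (v : ℕ → Fin n → ℂ)
    (hv : ∀ j k, v j k = Complex.exp (2 * (π : ℂ) * Complex.I / n) ^ (j * (k : ℕ)))
    (lam : ℕ → ℝ)
    (hlam : ∀ j, lam j = 2 * (-1) ^ j *
      ∑ i ∈ Finset.Icc 1 ((n - 1) / 2),
        (i : ℝ) ^ 2 * Real.cos (((n : ℝ) - 2 * i) * π * j / n)) :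
    (∀ j : ℕ, 1 ≤ j → j ≤ n →
      (cycleDistSqC n).mulVec (v j) = (lam j : ℂ) • v j) ∧
    spectrum ℂ (cycleDistSqC n) = {z : ℂ | ∃ j : ℕ, 1 ≤ j ∧ j ≤ n ∧ z = (lam j : ℂ)} := by
  have hn0 : n ≠ 0 := by omega
  haveI : NeZero n := ⟨hn0⟩
  set ω := Complex.exp (2 * (π : ℂ) * Complex.I / n) with hω
  have hωn : ω ^ n = 1 := aux_omega_pow_n n hn0
  have hvfun : ∀ j : ℕ, v j = fun k : Fin n => ω ^ (j * (k : ℕ)) := by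
    intro j; funext k; exact hv j k
  have hp1 : ∀ j : ℕ, (cycleDistSqC n).mulVec (v j) = (lam j : ℂ) • v j := by
    intro j
    rw [hvfun j, hlam j]
    exact aux_part1 hn hodd j
  refine ⟨fun j _ _ => hp1 j, ?_⟩
  -- spectrum part
  set x : Fin n → ℂ := fun t => ω ^ ((t : ℕ) + 1) with hx
  set P : Matrix (Fin n) (Fin n) ℂ := (Matrix.vandermonde x)ᵀ with hP
  set D : Matrix (Fin n) (Fin n) ℂ := Matrix.diagonal (fun t : Fin n => (lam ((t : ℕ) + 1) : ℂ))
    with hD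
  have hMP : cycleDistSqC n * P = P * D := by
    ext k t
    have hvp : ∀ m : Fin n, P m t = ω ^ (((t : ℕ) + 1) * (m : ℕ)) := by
      intro m
      simp only [hP, Matrix.transpose_apply, Matrix.vandermonde, hx, Matrix.of_apply]
      rw [← pow_mul]
    have hthis := congrFun (hp1 ((t : ℕ) + 1)) k
    rw [hvfun ((t : ℕ) + 1)] at hthis
    simp only [Matrix.mulVec, dotProduct, Pi.smul_apply, smul_eq_mul] at hthis
    rw [Matrix.mul_apply, Matrix.mul_diagonal]
    calc ∑ m : Fin n, cycleDistSqC n k m * P m t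
        = ∑ m : Fin n, cycleDistSqC n k m * ω ^ (((t : ℕ) + 1) * (m : ℕ)) := by
          refine Finset.sum_congr rfl fun m _ => by rw [hvp m]
      _ = _ := by rw [hthis, hvp k]; ring
  have hprim : IsPrimitiveRoot ω n := Complex.isPrimitiveRoot_exp n hn0
  have hxinj : Function.Injective x := by
    intro a b hab
    simp only [hx] at hab
    have ha := a.isLt; have hb := b.isLt
    rw [aux_pow_mod_eq hωn ((a : ℕ) + 1), aux_pow_mod_eq hωn ((b : ℕ) + 1)] at hab
    have hthis := hprim.pow_inj (Nat.mod_lt _ (by omega)) (Nat.mod_lt _ (by omega)) hab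
    have hcase : ∀ c : ℕ, c < n → (c + 1) % n = if c + 1 = n then 0 else c + 1 := by
      intro c hc
      split
      · next h => rw [h, Nat.mod_self]
      · next h => exact Nat.mod_eq_of_lt (by omega)
    rw [hcase _ ha, hcase _ hb] at hthis
    have : (a : ℕ) = (b : ℕ) := by
      by_cases h1 : (a : ℕ) + 1 = n <;> by_cases h2 : (b : ℕ) + 1 = n <;>
        simp [h1, h2] at hthis <;> omega
    exact Fin.ext this
  have hdet : P.det ≠ 0 := by
    rw [hP, Matrix.det_transpose, Matrix.det_vandermonde]
    refine Finset.prod_ne_zero_iff.mpr fun i _ => Finset.prod_ne_zero_iff.mpr fun t ht => ?_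
    rw [Finset.mem_Ioi] at ht
    exact sub_ne_zero.mpr fun h => ht.ne (hxinj h).symm
  have hunit : IsUnit P := (Matrix.isUnit_iff_isUnit_det P).mpr hdet.isUnit
  have hM : cycleDistSqC n = P * D * P⁻¹ := by
    have h1 : P * P⁻¹ = 1 := Matrix.mul_nonsing_inv P hdet.isUnit
    calc cycleDistSqC n = cycleDistSqC n * (P * P⁻¹) := by rw [h1, mul_one]
      _ = (cycleDistSqC n * P) * P⁻¹ := by rw [mul_assoc]
      _ = P * D * P⁻¹ := by rw [hMP]
  have hspec : spectrum ℂ (cycleDistSqC n) = spectrum ℂ D := by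
    rw [hM]
    have hu : (hunit.unit : Matrix (Fin n) (Fin n) ℂ) = P := hunit.unit_spec
    have hui : ((hunit.unit⁻¹ : (Matrix (Fin n) (Fin n) ℂ)ˣ) : Matrix (Fin n) (Fin n) ℂ)
        = P⁻¹ := by rw [Matrix.coe_units_inv, hu]
    have he : P * D * P⁻¹
        = (hunit.unit : Matrix (Fin n) (Fin n) ℂ) * D
            * ((hunit.unit⁻¹ : (Matrix (Fin n) (Fin n) ℂ)ˣ) : Matrix (Fin n) (Fin n) ℂ) := by
      rw [hu, hui]
    rw [he]; exact spectrum.units_conjugate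
  rw [hspec, hD, spectrum_diagonal]
  ext z
  simp only [Set.mem_range, Set.mem_setOf_eq]
  constructor
  · rintro ⟨t, ht⟩
    exact ⟨(t : ℕ) + 1, by omega, by have := t.isLt; omega, ht.symm⟩
  · rintro ⟨j, hj1, hj2, hz⟩
    refine ⟨⟨j - 1, by omega⟩, ?_⟩
    have : ((⟨j - 1, by omega⟩ : Fin n) : ℕ) + 1 = j := by simp; omega
    rw [this, hz]
end

section
/- Let n ≥ 4 be even and let Δ be the distance squared matrix of the cycle graph C_n. For each integer j with 1 ≤ j ≤ n, let v_j ∈ ℂ^n be the vector with entries (v_j)_k = ω^{jk} for k = 0,…,n−1, where ω = exp(2πi/n). Then Δ v_j = λ_j v_j, where λ_j = 2·(−1)^j · ( n²/8 + Σ_{i=1}^{n/2 − 1} i² · cos( (n − 2i)πj / n ) ). In particular the eigenvalues of Δ are exactly λ_1,…,λ_n. -/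
open Matrix

/-!
The matrix `Δ` is circulant, `Δ i k = d(k - i)²`, so each Fourier vector `k ↦ ω^{jk}` is an
eigenvector with eigenvalue `∑ₘ d(m)² ω^{jm}`; the Fourier vectors are the columns of an invertible
Vandermonde matrix, hence these values exhaust the spectrum. For `n = 2h` the sum folds at `m = h`:
pairing `m` with `n - m` gives `h² (-1)^j + ∑_{0<i<h} 2 i² cos (2πij/n)`, and
`cos ((n - 2i)πj/n) = (-1)^j cos (2πij/n)` turns this into the stated formula.
-/

open Finset

section Circulant

variable {R : Type*} {n : ℕ} [NeZero n]

theorem circulant_mulVec_pow_val [CommSemiring R] (c : Fin n → R) {ζ : R} (hζ : ζ ^ n = 1) :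
    circulant c *ᵥ (fun k : Fin n => ζ ^ (k : ℕ)) =
      (∑ m, c (-m) * ζ ^ (m : ℕ)) • fun k : Fin n => ζ ^ (k : ℕ) := by
  ext i
  simp only [mulVec, dotProduct, circulant_apply, Pi.smul_apply, smul_eq_mul, sum_mul]
  refine Fintype.sum_equiv (Equiv.subRight i) _ _ fun k => ?_
  have hk : ζ ^ (k : ℕ) = ζ ^ ((k - i : Fin n) : ℕ) * ζ ^ (i : ℕ) := by
    conv_lhs => rw [← sub_add_cancel k i]
    rw [Fin.val_add, ← pow_eq_pow_mod _ hζ, pow_add]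
  rw [Equiv.subRight_apply, neg_sub, hk, mul_assoc]

theorem spectrum_eq_range_of_mul_eq_mul_diagonal [Field R] {ι : Type*} [Fintype ι]
    [DecidableEq ι] {A P : Matrix ι ι R} (hP : IsUnit P) {d : ι → R}
    (h : A * P = P * diagonal d) : spectrum R A = Set.range d := by
  obtain ⟨u, rfl⟩ := hP
  have hA : A = u * diagonal d * (↑u⁻¹ : Matrix ι ι R) := by rw [← h, Units.mul_inv_cancel_right]
  rw [hA, spectrum.units_conjugate, spectrum_diagonal]

theorem spectrum_circulant [Field R] (c : Fin n → R) {ω : R} (hω : IsPrimitiveRoot ω n) :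
    spectrum R (circulant c) =
      Set.range fun a : Fin n => ∑ m, c (-m) * (ω ^ (a : ℕ)) ^ (m : ℕ) := by
  set w : Fin n → R := fun a => ω ^ (a : ℕ)
  refine spectrum_eq_range_of_mul_eq_mul_diagonal (P := (vandermonde w)ᵀ) ?_ ?_
  · have hw : Function.Injective w := fun a b hab => Fin.ext (hω.pow_inj a.isLt b.isLt hab)
    rw [isUnit_iff_isUnit_det, det_transpose]
    exact (det_vandermonde_ne_zero_iff.mpr hw).isUnit
  · ext k a
    have hcol := congrFun (circulant_mulVec_pow_val c (ζ := w a) (by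
      rw [pow_right_comm, hω.pow_eq_one, one_pow])) k
    rw [mul_diagonal, mul_apply]
    simpa only [mulVec, dotProduct, circulant_apply, transpose_apply, vandermonde_apply,
      Pi.smul_apply, smul_eq_mul, mul_comm] using hcol

end Circulant

section CycleDistance

variable {n : ℕ} [NeZero n]

theorem cycDist_zero_left (m : Fin n) : cycDist n 0 m = min (m : ℕ) (n - m) := by
  simp [cycDist]

theorem cycDist_eq_cycDist_zero_sub (i k : Fin n) : cycDist n i k = cycDist n 0 (k - i) := by
  rw [cycDist_zero_left, cycDist]
  rcases le_or_gt i k with h | h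
  · rw [Fin.coe_sub_iff_le.2 h]; omega
  · rw [Fin.coe_sub_iff_lt.2 h]; omega

theorem cycleDistSqC_eq_circulant :
    cycleDistSqC n = circulant fun m => (cycDist n 0 (-m) : ℂ) ^ 2 := by
  ext i k
  rw [cycleDistSqC, of_apply, circulant_apply, neg_sub, cycDist_eq_cycDist_zero_sub]

end CycleDistance

theorem sum_range_min_sq_mul_pow {R : Type*} [CommSemiring R] (ζ : R) {h : ℕ} (hh : 0 < h) :
    ∑ m ∈ range (2 * h), ((min m (2 * h - m) : ℕ) : R) ^ 2 * ζ ^ m =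
      (h : R) ^ 2 * ζ ^ h + ∑ i ∈ Ico 1 h, (i : R) ^ 2 * (ζ ^ i + ζ ^ (2 * h - i)) := by
  set f : ℕ → R := fun m => ((min m (2 * h - m) : ℕ) : R) ^ 2 * ζ ^ m
  have hreflect : ∑ m ∈ Ico (h + 1) (2 * h), f m = ∑ i ∈ Ico 1 h, f (2 * h - i) := by
    have := sum_Ico_reflect f 1 (show h ≤ 2 * h + 1 by omega)
    rwa [show 2 * h + 1 - h = h + 1 by omega, show 2 * h + 1 - 1 = 2 * h by omega, eq_comm] at this
  have hfold : ∀ i ∈ Ico 1 h, f i + f (2 * h - i) = (i : R) ^ 2 * (ζ ^ i + ζ ^ (2 * h - i)) := by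
    intro i hi
    have hi := mem_Ico.1 hi
    simp only [f, show min i (2 * h - i) = i by omega,
      show min (2 * h - i) (2 * h - (2 * h - i)) = i by omega, mul_add]
  have hf0 : f 0 = 0 := by simp [f]
  have hfh : f h = (h : R) ^ 2 * ζ ^ h := by simp only [f, show min h (2 * h - h) = h by omega]
  rw [range_eq_Ico, ← sum_Ico_consecutive f (Nat.zero_le (h + 1)) (by omega),
    sum_Ico_succ_top (Nat.zero_le h), sum_eq_sum_Ico_succ_bot hh, hreflect, hf0, hfh,
    ← sum_congr rfl hfold, sum_add_distrib]
  ring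

theorem IsPrimitiveRoot.pow_eq_neg_one_of_two_mul {R : Type*} [CommRing R] [IsDomain R] {ω : R}
    {h : ℕ} (hω : IsPrimitiveRoot ω (2 * h)) (hh : h ≠ 0) : ω ^ h = -1 := by
  have := hω.pow_of_dvd hh (dvd_mul_left h 2)
  rw [Nat.mul_div_cancel _ (Nat.pos_of_ne_zero hh)] at this
  exact this.eq_neg_one_of_two_right

open Complex in
theorem exp_mul_I_pow_add_pow_sub {x : ℝ} {n i : ℕ} (hx : exp (x * I) ^ n = 1) (hi : i ≤ n) :
    exp (x * I) ^ i + exp (x * I) ^ (n - i) = 2 * Real.cos (i * x) := by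
  rw [pow_sub₀ _ (exp_ne_zero _) hi, hx, one_mul, ← exp_nat_mul, ← exp_neg, ofReal_cos, two_cos]
  push_cast
  ring_nf

open Real in
theorem sum_cycDist_sq_mul_exp_pow {n : ℕ} [NeZero n] (heven : Even n) (j : ℕ) :
    ∑ m : Fin n, (cycDist n 0 m : ℂ) ^ 2 *
        (Complex.exp (2 * (π : ℂ) * Complex.I / n) ^ j) ^ (m : ℕ) =
      ((2 * (-1) ^ j * ((n : ℝ) ^ 2 / 8 + ∑ i ∈ Icc 1 (n / 2 - 1),
          (i : ℝ) ^ 2 * Real.cos (((n : ℝ) - 2 * i) * π * j / n)) : ℝ) : ℂ) := by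
  obtain ⟨h, hnh⟩ := heven
  obtain rfl : n = 2 * h := by omega
  have hh : h ≠ 0 := by have := NeZero.ne (2 * h); omega
  set ω := Complex.exp (2 * (π : ℂ) * Complex.I / (2 * h : ℕ))
  have hω : IsPrimitiveRoot ω (2 * h) := Complex.isPrimitiveRoot_exp _ (NeZero.ne _)
  set θ : ℝ := 2 * π * j / (2 * h : ℕ)
  have hθ : ω ^ j = Complex.exp (θ * Complex.I) := by
    rw [← Complex.exp_nat_mul]; push_cast [θ]; ring_nf
  have hhalf : (ω ^ j) ^ h = (-1) ^ j := by
    rw [pow_right_comm, hω.pow_eq_neg_one_of_two_mul hh]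
  have hpair : ∀ i ∈ Ico 1 h, (ω ^ j) ^ i + (ω ^ j) ^ (2 * h - i) = 2 * Real.cos (i * θ) := by
    intro i hi
    have hperiod : (ω ^ j) ^ (2 * h) = 1 := by rw [pow_right_comm, hω.pow_eq_one, one_pow]
    rw [hθ] at hperiod ⊢
    exact exp_mul_I_pow_add_pow_sub hperiod (by have := mem_Ico.1 hi; omega)
  have hcos : ∀ i : ℕ, Real.cos (((2 * h : ℕ) - 2 * i) * π * j / (2 * h : ℕ)) =
      (-1) ^ j * Real.cos (i * θ) := by
    intro i
    rw [← Real.cos_nat_mul_pi_sub]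
    congr 1
    push_cast [θ]
    field_simp
  have hIcc : Icc 1 (2 * h / 2 - 1) = Ico 1 h := by
    ext i; simp only [mem_Icc, mem_Ico]; omega
  have hsign : ((-1 : ℂ) ^ j) ^ 2 = 1 := by rw [← pow_mul, mul_comm, pow_mul]; norm_num
  simp only [cycDist_zero_left]
  rw [Fin.sum_univ_eq_sum_range (fun m => ((min m (2 * h - m) : ℕ) : ℂ) ^ 2 * (ω ^ j) ^ m),
    sum_range_min_sq_mul_pow _ (Nat.pos_of_ne_zero hh), hhalf, hIcc, sum_congr rfl fun i hi => by
      rw [hpair i hi]]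
  simp only [hcos]
  push_cast
  rw [mul_add, mul_sum]
  congr 1
  · ring
  · refine sum_congr rfl fun i _ => ?_
    linear_combination (-2 * (i : ℂ) ^ 2 * Complex.cos (i * θ)) * hsign

theorem range_fin_val_eq_image_Icc {α : Type*} {n : ℕ} (f : ℕ → α) (hf : f n = f 0) :
    Set.range (fun a : Fin n => f a) = f '' Set.Icc 1 n := by
  ext z
  constructor
  · rintro ⟨a, rfl⟩
    by_cases ha : (a : ℕ) = 0
    · exact ⟨n, ⟨by omega, le_rfl⟩, by simp only [hf, ha]⟩
    · exact ⟨a, ⟨by omega, a.isLt.le⟩, rfl⟩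
  · rintro ⟨j, ⟨hj1, hjn⟩, rfl⟩
    by_cases hj : j = n
    · subst hj
      exact ⟨⟨0, by omega⟩, hf.symm⟩
    · exact ⟨⟨j, by omega⟩, rfl⟩

open Real in
/-- eigenvalues of the distance squared matrix of an even cycle. -/
theorem stmt8 {n : ℕ} (hn : 4 ≤ n) (heven : Even n)
    (v : ℕ → Fin n → ℂ)
    (hv : ∀ j k, v j k = Complex.exp (2 * (π : ℂ) * Complex.I / n) ^ (j * (k : ℕ)))
    (lam : ℕ → ℝ)
    (hlam : ∀ j, lam j = 2 * (-1) ^ j *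
      ((n : ℝ) ^ 2 / 8 +
        ∑ i ∈ Finset.Icc 1 (n / 2 - 1),
          (i : ℝ) ^ 2 * Real.cos (((n : ℝ) - 2 * i) * π * j / n))) :
    (∀ j : ℕ, 1 ≤ j → j ≤ n →
      (cycleDistSqC n).mulVec (v j) = (lam j : ℂ) • v j) ∧
    spectrum ℂ (cycleDistSqC n) = {z : ℂ | ∃ j : ℕ, 1 ≤ j ∧ j ≤ n ∧ z = (lam j : ℂ)} := by
  have : NeZero n := ⟨by omega⟩
  set ω := Complex.exp (2 * (π : ℂ) * Complex.I / n)
  have hω : IsPrimitiveRoot ω n := Complex.isPrimitiveRoot_exp n (NeZero.ne n)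
  have hv' : ∀ j, v j = fun k : Fin n => (ω ^ j) ^ (k : ℕ) := fun j => by
    ext k; rw [hv, pow_mul]
  have hlam' : ∀ j, (lam j : ℂ) = ∑ m : Fin n, (cycDist n 0 m : ℂ) ^ 2 * (ω ^ j) ^ (m : ℕ) :=
    fun j => by rw [hlam]; exact (sum_cycDist_sq_mul_exp_pow heven j).symm
  rw [cycleDistSqC_eq_circulant]
  refine ⟨fun j _ _ => ?_, ?_⟩
  · rw [hv', circulant_mulVec_pow_val _ (by rw [pow_right_comm, hω.pow_eq_one, one_pow])]
    simp only [neg_neg, ← hlam']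
  · rw [spectrum_circulant _ hω]
    simp only [neg_neg, ← hlam']
    rw [range_fin_val_eq_image_Icc (fun j => (lam j : ℂ)) (by simp [hlam', hω.pow_eq_one])]
    ext z
    simp [eq_comm, and_assoc]
end

section
/- Let m ≥ 2, let n = 2m, and let Δ be the distance squared matrix of the even cycle C_n. Set λ = m(2m² + 1)/3 (the common row sum of Δ, which is its largest eigenvalue). Then Δ is invertible and Δ^{−1} = (1/(4λm)) · ( 2J + B ), where J is the n×n all-ones matrix and B is the n×n circulant matrix determined by its first row (indexed by j = 0,…,n−1): B_{0,j} = −λ if j = m−1 or j = m+1, B_{0,m} = 2λ, and B_{0,j} = 0 otherwise, with each subsequent row the cyclic right shift of the previous row. -/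
open Matrix

lemma modlt {n x y : ℕ} (h1 : x < n) (h2 : x = y) : x % n = y := by
  rw [Nat.mod_eq_of_lt h1, h2]

lemma modsub2 {n x y : ℕ} (h1 : n ≤ x) (h2 : x < 2*n) (h3 : x - n = y) : x % n = y := by
  rw [Nat.mod_eq_sub_mod h1, Nat.mod_eq_of_lt (by omega), h3]

lemma cycDist_eq {n : ℕ} [NeZero n] (i j : Fin n) :
    cycDist n i j = min ((j - i : Fin n) : ℕ) (n - ((j - i : Fin n) : ℕ)) := by
  have hi := i.isLt; have hj := j.isLt
  have hv : ((j - i : Fin n) : ℕ) = (n - (i:ℕ) + (j:ℕ)) % n := by rw [Fin.sub_def]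
  unfold cycDist
  rcases le_or_gt (i:ℕ) (j:ℕ) with h | h
  · rw [hv, show n - (i:ℕ) + (j:ℕ) = ((j:ℕ) - (i:ℕ)) + n by omega,
      Nat.add_mod_right, Nat.mod_eq_of_lt (by omega)]
    omega
  · rw [hv, Nat.mod_eq_of_lt (by omega)]
    omega

lemma modsub {n : ℕ} [NeZero n] (i j : Fin n) :
    ((j:ℕ) + n - (i:ℕ)) % n = ((j - i : Fin n) : ℕ) := by
  rw [Fin.sub_def]
  congr 1
  have := i.isLt
  omega

lemma sumsq (n : ℕ) : ∑ t ∈ Finset.range n, (t:ℝ)^2 = (n:ℝ)*((n:ℝ)-1)*(2*(n:ℝ)-1)/6 := by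
  induction n with
  | zero => simp
  | succ k ih => rw [Finset.sum_range_succ, ih]; push_cast; ring

lemma rowsum (m : ℕ) (hm : 2 ≤ m) :
    ∑ t ∈ Finset.range (2*m), ((min t (2*m - t) : ℕ) : ℝ)^2
      = (m:ℝ)*(2*(m:ℝ)^2+1)/3 := by
  rw [← Finset.sum_range_add_sum_Ico _ (show m+1 ≤ 2*m by omega)]
  have e1 : ∑ t ∈ Finset.range (m+1), ((min t (2*m-t):ℕ):ℝ)^2
      = ∑ t ∈ Finset.range (m+1), (t:ℝ)^2 := by
    apply Finset.sum_congr rfl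
    intro t ht
    rw [Finset.mem_range] at ht
    rw [show min t (2*m-t) = t by omega]
  have e2 : ∑ t ∈ Finset.Ico (m+1) (2*m), ((min t (2*m-t):ℕ):ℝ)^2
      = ∑ s ∈ Finset.Ico 1 m, (s:ℝ)^2 := by
    refine Finset.sum_bij' (fun t _ => 2*m - t) (fun s _ => 2*m - s) ?_ ?_ ?_ ?_ ?_
    · intro a ha; simp only [Finset.mem_Ico] at ha ⊢; omega
    · intro a ha; simp only [Finset.mem_Ico] at ha ⊢; omega
    · intro a ha; simp only [Finset.mem_Ico] at ha; show 2*m - (2*m - a) = a; omega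
    · intro a ha; simp only [Finset.mem_Ico] at ha; show 2*m - (2*m - a) = a; omega
    · intro a ha; simp only [Finset.mem_Ico] at ha
      rw [show min a (2*m-a) = 2*m - a by omega]
  have e3 : ∑ s ∈ Finset.Ico 1 m, (s:ℝ)^2 = ∑ s ∈ Finset.range m, (s:ℝ)^2 := by
    rw [Finset.range_eq_Ico, ← Finset.sum_Ico_consecutive _ (Nat.zero_le 1) (by omega : 1 ≤ m)]
    simp
  rw [e1, e2, e3, sumsq, sumsq]
  push_cast
  ring

lemma keyval (m u : ℕ) (hm : 2 ≤ m) (hu : u < 2*m) :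
    2 + 2*((min ((u+m)%(2*m)) (2*m - (u+m)%(2*m)) : ℕ):ℝ)^2
      - ((min ((u+m+1)%(2*m)) (2*m - (u+m+1)%(2*m)) : ℕ):ℝ)^2
      - ((min ((u+m-1)%(2*m)) (2*m - (u+m-1)%(2*m)) : ℕ):ℝ)^2
    = if u = 0 then 4*(m:ℝ) else 0 := by
  have hcase : u = 0 ∨ (1 ≤ u ∧ u + 2 ≤ m) ∨ u = m-1 ∨ u = m ∨ (m+1 ≤ u) := by omega
  rcases hcase with h | h | h | h | h
  · subst h
    obtain ⟨k, rfl⟩ : ∃ k, m = k + 1 := ⟨m - 1, by omega⟩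
    rw [if_pos rfl,
      modlt (n := 2*(k+1)) (by omega) (by omega : 0+(k+1) = k+1),
      modlt (n := 2*(k+1)) (by omega) (by omega : 0+(k+1)+1 = k+2),
      modlt (n := 2*(k+1)) (by omega) (by omega : 0+(k+1)-1 = k),
      show min (k+1) (2*(k+1)-(k+1)) = k+1 by omega,
      show min (k+2) (2*(k+1)-(k+2)) = k by omega,
      show min k (2*(k+1)-k) = k by omega]
    push_cast
    ring
  · obtain ⟨hu1, hu2⟩ := h
    obtain ⟨w, rfl⟩ : ∃ w, m = u + 1 + w := ⟨m - u - 1, by omega⟩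
    rw [if_neg (by omega),
      modlt (by omega) (by omega : u+(u+1+w) = 2*u+1+w),
      modlt (by omega) (by omega : u+(u+1+w)+1 = 2*u+2+w),
      modlt (by omega) (by omega : u+(u+1+w)-1 = 2*u+w),
      show min (2*u+1+w) (2*(u+1+w)-(2*u+1+w)) = w+1 by omega,
      show min (2*u+2+w) (2*(u+1+w)-(2*u+2+w)) = w by omega,
      show min (2*u+w) (2*(u+1+w)-(2*u+w)) = w+2 by omega]
    push_cast
    ring
  · rw [if_neg (by omega),
      modlt (by omega) (rfl : u+m = u+m),
      modsub2 (by omega) (by omega) (by omega : u+m+1-2*m = 0),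
      modlt (by omega) (rfl : u+m-1 = u+m-1),
      show min (u+m) (2*m-(u+m)) = 1 by omega,
      show min 0 (2*m-0) = 0 by omega,
      show min (u+m-1) (2*m-(u+m-1)) = 2 by omega]
    norm_num
  · rw [if_neg (by omega),
      modsub2 (by omega) (by omega) (by omega : u+m-2*m = 0),
      modsub2 (by omega) (by omega) (by omega : u+m+1-2*m = 1),
      modlt (by omega) (rfl : u+m-1 = u+m-1),
      show min 0 (2*m-0) = 0 by omega,
      show min 1 (2*m-1) = 1 by omega,
      show min (u+m-1) (2*m-(u+m-1)) = 1 by omega]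
    norm_num
  · obtain ⟨w, rfl⟩ : ∃ w, u = m + 1 + w := ⟨u - m - 1, by omega⟩
    rw [if_neg (by omega),
      modsub2 (by omega) (by omega) (by omega : m+1+w+m-2*m = w+1),
      modsub2 (by omega) (by omega) (by omega : m+1+w+m+1-2*m = w+2),
      modsub2 (by omega) (by omega) (by omega : m+1+w+m-1-2*m = w),
      show min (w+1) (2*m-(w+1)) = w+1 by omega,
      show min (w+2) (2*m-(w+2)) = w+2 by omega,
      show min w (2*m-w) = w by omega]
    push_cast
    ring


/-- the inverse of the distance squared matrix of an even cycle. -/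
theorem stmt10 {m : ℕ} (hm : 2 ≤ m)
    (lam : ℝ) (hlam : lam = (m : ℝ) * (2 * (m : ℝ) ^ 2 + 1) / 3)
    (B : Matrix (Fin (2 * m)) (Fin (2 * m)) ℝ)
    (hB : ∀ i j : Fin (2 * m),
      B i j =
        if ((j : ℕ) + 2 * m - (i : ℕ)) % (2 * m) = m - 1 ∨
           ((j : ℕ) + 2 * m - (i : ℕ)) % (2 * m) = m + 1 then -lam
        else if ((j : ℕ) + 2 * m - (i : ℕ)) % (2 * m) = m then 2 * lam
        else 0) :
    IsUnit (cycleDistSq (2 * m)) ∧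
    (cycleDistSq (2 * m))⁻¹ =
      (1 / (4 * lam * (m : ℝ))) •
        ((2 : ℝ) • (Matrix.of fun _ _ : Fin (2 * m) => (1 : ℝ)) + B) := by
  haveI : NeZero (2 * m) := ⟨by omega⟩
  have hmR : (2:ℝ) ≤ (m:ℝ) := by exact_mod_cast hm
  have hlam_pos : (0:ℝ) < lam := by rw [hlam]; nlinarith
  have key : cycleDistSq (2*m) * ((2:ℝ) • (Matrix.of fun _ _ : Fin (2*m) => (1:ℝ)) + B)
      = (4*lam*(m:ℝ)) • (1 : Matrix (Fin (2*m)) (Fin (2*m)) ℝ) := by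
    ext i k
    rw [Matrix.mul_apply]
    set F : Fin (2*m) → ℝ := fun t => ((min (t:ℕ) (2*m - (t:ℕ)) : ℕ) : ℝ)^2 with hF
    set G : Fin (2*m) → ℝ := fun s =>
      if (s:ℕ) = m - 1 ∨ (s:ℕ) = m + 1 then -lam else if (s:ℕ) = m then 2*lam else 0 with hG
    have hstep : ∀ j : Fin (2*m),
        cycleDistSq (2*m) i j * (((2:ℝ) • (Matrix.of fun _ _ : Fin (2*m) => (1:ℝ)) + B) j k)
        = F (j - i) * (2 + G ((k - i) - (j - i))) := by
      intro j
      have h1 : cycleDistSq (2*m) i j = F (j - i) := by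
        show ((cycDist (2*m) i j : ℝ))^2 = _
        rw [cycDist_eq]
      have h2 : B j k = G ((k - i) - (j - i)) := by
        rw [sub_sub_sub_cancel_right, hB, hG]
        rw [modsub j k]
      rw [h1]
      simp only [Matrix.add_apply, Matrix.smul_apply, Matrix.of_apply, smul_eq_mul, mul_one]
      rw [h2]
    simp only [hstep]
    rw [Fintype.sum_equiv (Equiv.subRight i)
      (fun j => F (j - i) * (2 + G ((k - i) - (j - i))))
      (fun t => F t * (2 + G ((k - i) - t))) (fun j => rfl)]
    set u : Fin (2*m) := k - i with hu
    set c1 : Fin (2*m) := ⟨m - 1, by omega⟩ with hc1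
    set c2 : Fin (2*m) := ⟨m + 1, by omega⟩ with hc2
    set c3 : Fin (2*m) := ⟨m, by omega⟩ with hc3
    have hc1v : (c1:ℕ) = m - 1 := rfl
    have hc2v : (c2:ℕ) = m + 1 := rfl
    have hc3v : (c3:ℕ) = m := rfl
    have hiff : ∀ (t c : Fin (2*m)), (u - t = c) ↔ (t = u - c) := by
      intro t c
      constructor
      · intro h; rw [← h, sub_sub_cancel]
      · intro h; rw [h, sub_sub_cancel]
    have hd12 : u - c1 ≠ u - c2 := by
      intro h
      have h' := sub_right_injective h
      have : (c1:ℕ) = (c2:ℕ) := by rw [h']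
      rw [hc1v, hc2v] at this
      omega
    have hd13 : u - c1 ≠ u - c3 := by
      intro h
      have h' := sub_right_injective h
      have : (c1:ℕ) = (c3:ℕ) := by rw [h']
      rw [hc1v, hc3v] at this
      omega
    have hd23 : u - c2 ≠ u - c3 := by
      intro h
      have h' := sub_right_injective h
      have : (c2:ℕ) = (c3:ℕ) := by rw [h']
      rw [hc2v, hc3v] at this
      omega
    have hGsplit : ∀ t : Fin (2*m), F t * (2 + G (u - t))
        = 2 * F t + ((if t = u - c1 then -lam * F t else 0)
          + (if t = u - c2 then -lam * F t else 0)
          + (if t = u - c3 then 2*lam * F t else 0)) := by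
      intro t
      have e1 : (((u - t : Fin (2*m)):ℕ) = m - 1) ↔ (t = u - c1) :=
        Iff.trans (Iff.symm Fin.ext_iff) (hiff t c1)
      have e2 : (((u - t : Fin (2*m)):ℕ) = m + 1) ↔ (t = u - c2) :=
        Iff.trans (Iff.symm Fin.ext_iff) (hiff t c2)
      have e3 : (((u - t : Fin (2*m)):ℕ) = m) ↔ (t = u - c3) :=
        Iff.trans (Iff.symm Fin.ext_iff) (hiff t c3)
      rw [hG]
      simp only [e1, e2, e3]
      by_cases h1 : t = u - c1
      · have h2 : t ≠ u - c2 := by rw [h1]; exact hd12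
        have h3 : t ≠ u - c3 := by rw [h1]; exact hd13
        rw [if_pos (Or.inl h1), if_pos h1, if_neg h2, if_neg h3]; ring
      · by_cases h2 : t = u - c2
        · have h3 : t ≠ u - c3 := by rw [h2]; exact hd23
          rw [if_pos (Or.inr h2), if_neg h1, if_pos h2, if_neg h3]; ring
        · by_cases h3 : t = u - c3
          · rw [if_neg (by tauto), if_pos h3, if_neg h1, if_neg h2, if_pos h3]; ring
          · rw [if_neg (by tauto), if_neg h3, if_neg h1, if_neg h2, if_neg h3]; ring
    simp only [hGsplit]
    rw [Finset.sum_add_distrib, Finset.sum_add_distrib, Finset.sum_add_distrib,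
      Finset.sum_ite_eq' Finset.univ (u - c1), Finset.sum_ite_eq' Finset.univ (u - c2),
      Finset.sum_ite_eq' Finset.univ (u - c3)]
    simp only [Finset.mem_univ, if_true]
    have hrow : ∑ t : Fin (2*m), 2 * F t = 2 * lam := by
      rw [← Finset.mul_sum, hF]
      rw [show ∑ t : Fin (2*m), ((min (t:ℕ) (2*m - (t:ℕ)) : ℕ) : ℝ)^2
          = ∑ t ∈ Finset.range (2*m), ((min t (2*m - t) : ℕ) : ℝ)^2 from
        Fin.sum_univ_eq_sum_range (fun t => ((min t (2*m - t) : ℕ) : ℝ)^2) (2*m)]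
      rw [rowsum m hm, hlam]
    rw [hrow]
    have v1 : ((u - c1 : Fin (2*m)) : ℕ) = ((u:ℕ) + m + 1) % (2*m) := by
      rw [Fin.sub_def]
      show (2*m - (c1:ℕ) + (u:ℕ)) % (2*m) = _
      rw [hc1v]
      congr 1
      omega
    have v2 : ((u - c2 : Fin (2*m)) : ℕ) = ((u:ℕ) + m - 1) % (2*m) := by
      rw [Fin.sub_def]
      show (2*m - (c2:ℕ) + (u:ℕ)) % (2*m) = _
      rw [hc2v]
      congr 1
      have := u.isLt
      omega
    have v3 : ((u - c3 : Fin (2*m)) : ℕ) = ((u:ℕ) + m) % (2*m) := by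
      rw [Fin.sub_def]
      show (2*m - (c3:ℕ) + (u:ℕ)) % (2*m) = _
      rw [hc3v]
      congr 1
      omega
    have hFv1 : F (u - c1) = ((min (((u:ℕ)+m+1)%(2*m)) (2*m - ((u:ℕ)+m+1)%(2*m)) : ℕ):ℝ)^2 := by
      rw [hF]; simp only [v1]
    have hFv2 : F (u - c2) = ((min (((u:ℕ)+m-1)%(2*m)) (2*m - ((u:ℕ)+m-1)%(2*m)) : ℕ):ℝ)^2 := by
      rw [hF]; simp only [v2]
    have hFv3 : F (u - c3) = ((min (((u:ℕ)+m)%(2*m)) (2*m - ((u:ℕ)+m)%(2*m)) : ℕ):ℝ)^2 := by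
      rw [hF]; simp only [v3]
    have hkv := keyval m (u:ℕ) hm u.isLt
    have hiku : (i = k) ↔ ((u:ℕ) = 0) := by
      rw [hu]
      constructor
      · intro h; rw [h, sub_self]; simp
      · intro h
        have h0 : k - i = 0 := by
          apply Fin.ext
          simpa using h
        exact (sub_eq_zero.mp h0).symm
    rw [hFv1, hFv2, hFv3, Matrix.smul_apply, Matrix.one_apply]
    by_cases hik : i = k
    · rw [if_pos hik]
      rw [if_pos (hiku.mp hik)] at hkv
      simp only [smul_eq_mul, mul_one]
      linear_combination lam * hkv
    · rw [if_neg hik]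
      rw [if_neg (fun h => hik (hiku.mpr h))] at hkv
      simp only [smul_eq_mul, mul_zero]
      linear_combination lam * hkv
  have hc : (1 / (4 * lam * (m:ℝ))) * (4 * lam * (m:ℝ)) = 1 := by
    have h4 : (4 * lam * (m:ℝ)) ≠ 0 := by positivity
    field_simp
  have h1 : cycleDistSq (2*m) * ((1 / (4 * lam * (m : ℝ))) •
      ((2 : ℝ) • (Matrix.of fun _ _ : Fin (2 * m) => (1 : ℝ)) + B)) = 1 := by
    rw [Matrix.mul_smul, key, smul_smul, hc, one_smul]
  have h2 : ((1 / (4 * lam * (m : ℝ))) •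
      ((2 : ℝ) • (Matrix.of fun _ _ : Fin (2 * m) => (1 : ℝ)) + B)) * cycleDistSq (2*m) = 1 :=
    mul_eq_one_comm.mp h1
  exact ⟨⟨⟨_, _, h1, h2⟩, rfl⟩, Matrix.inv_eq_right_inv h1⟩
end
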